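/- arXiv:2510.00443 — 6 statements merged into one kernel-verified Lean document; each statement's English description precedes it below -/
import Mathlib

section
/- For any set of phase factors Ψ = (ψ_0,...,ψ_d) ∈ ℝ^{d+1}, the real part of [U_d(x,Ψ)]_{1,1} can be recovered from the imaginary part by adding π/4 to both ψ_0 and ψ_d: Re[U_d(x,Ψ)]_{1,1} = Im[e^{i(π/4)Z} U_d(x,Ψ) e^{i(π/4)Z}]_{1,1} for all x ∈ [-1,1]. -/
open Matrix Complex

noncomputable def Wx (x : ℝ) : Matrix (Fin 2) (Fin 2) ℂ :=
  !![(x : ℂ), Complex.I * Real.sqrt (1 - x ^ 2);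
     Complex.I * Real.sqrt (1 - x ^ 2), (x : ℂ)]

/-- `e^{i ψ Z}` for the Pauli matrix `Z = diag(1,-1)`. -/
noncomputable def eiZ (ψ : ℝ) : Matrix (Fin 2) (Fin 2) ℂ :=
  !![Complex.exp (Complex.I * ψ), 0; 0, Complex.exp (-(Complex.I * ψ))]

/-- The QSP unitary `U_d(x, Ψ) = e^{iψ₀Z} ∏_{j=1}^d [W(x) e^{iψⱼZ}]`. -/
noncomputable def Ud (d : ℕ) (Ψ : Fin (d + 1) → ℝ) (x : ℝ) : Matrix (Fin 2) (Fin 2) ℂ :=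
  eiZ (Ψ 0) * (List.ofFn (fun j : Fin d => Wx x * eiZ (Ψ j.succ))).prod

theorem qsp_re_im_equiv (d : ℕ) (Ψ : Fin (d + 1) → ℝ) :
    ∀ x ∈ Set.Icc (-1 : ℝ) 1,
      (Ud d Ψ x 0 0).re =
        ((eiZ (Real.pi / 4) * Ud d Ψ x * eiZ (Real.pi / 4)) 0 0).im := by
  intro x _
  set A := Ud d Ψ x
  have h : (eiZ (Real.pi / 4) * A * eiZ (Real.pi / 4)) 0 0
      = Complex.exp (Complex.I * (Real.pi / 4)) * A 0 0 *
        Complex.exp (Complex.I * (Real.pi / 4)) := by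
    simp [eiZ, Matrix.mul_apply, Fin.sum_univ_two, Matrix.vecMul, Matrix.vecHead, Matrix.vecTail, dotProduct]
  rw [h]
  have he : Complex.exp (Complex.I * (Real.pi / 4)) * Complex.exp (Complex.I * (Real.pi / 4))
      = Complex.I := by
    rw [← Complex.exp_add]
    have : Complex.I * (Real.pi / 4) + Complex.I * (Real.pi / 4)
        = (Real.pi / 2 : ℝ) * Complex.I := by push_cast; ring
    rw [this, Complex.exp_mul_I]
    simp
  calc (A 0 0).re
      = (Complex.I * A 0 0).im := by simp
    _ = (Complex.exp (Complex.I * (Real.pi / 4)) * A 0 0 *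
        Complex.exp (Complex.I * (Real.pi / 4))).im := by
        rw [mul_assoc, mul_comm (A 0 0), ← mul_assoc, he]
end

section
/- For any phase factors Ψ = (ψ_0,...,ψ_d) ∈ [-π,π)^{d+1} and any x ∈ [-1,1], the matrix U_d(x,Ψ) is unitary with determinant 1, and its (1,1) entry P(x) and the function Q(x) defined by [U_d(x,Ψ)]_{1,2} = i Q(x)√(1-x²) satisfy: P is a polynomial of degree ≤ d with parity d mod 2, Q is a polynomial of degree ≤ d-1 with parity (d-1) mod 2, and |P(x)|² + (1-x²)|Q(x)|² = 1 for all x ∈ [-1,1]. -/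
open Matrix Complex Polynomial

/-- A polynomial has parity `p` if all nonzero coefficients occur in degrees `≡ p [MOD 2]`. -/
def HasParity (P : Polynomial ℂ) (p : ℕ) : Prop :=
  ∀ n : ℕ, P.coeff n ≠ 0 → n % 2 = p % 2

section aux

lemma Ud_zero' (Ψ : Fin 1 → ℝ) (x : ℝ) : Ud 0 Ψ x = eiZ (Ψ 0) := by
  simp [Ud]

lemma Ud_succ' (d : ℕ) (Ψ : Fin (d + 2) → ℝ) (x : ℝ) :
    Ud (d + 1) Ψ x = eiZ (Ψ 0) * Wx x * Ud d (fun j => Ψ j.succ) x := by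
  simp [Ud, List.ofFn_succ, mul_assoc]

lemma conj_eval' (P : Polynomial ℂ) (z : ℂ) :
    (P.map (starRingEnd ℂ)).eval (starRingEnd ℂ z) = starRingEnd ℂ (P.eval z) := by
  have h := Polynomial.hom_eval₂ P (RingHom.id ℂ) (starRingEnd ℂ) z
  rw [Polynomial.eval_map]
  simpa using h.symm

lemma eval_map_conj' (P : Polynomial ℂ) (x : ℝ) :
    (P.map (starRingEnd ℂ)).eval (x : ℂ) = starRingEnd ℂ (P.eval (x : ℂ)) := by
  rw [← conj_eval']
  simp

lemma conj_exp₁ (ψ : ℝ) : starRingEnd ℂ (Complex.exp (Complex.I * ψ)) = Complex.exp (-(Complex.I * ψ)) := by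
  rw [← Complex.exp_conj]; simp

lemma conj_exp₂ (ψ : ℝ) : starRingEnd ℂ (Complex.exp (-(Complex.I * ψ))) = Complex.exp (Complex.I * ψ) := by
  rw [← Complex.exp_conj]; simp

lemma eiZ_mem' (ψ : ℝ) : eiZ ψ ∈ Matrix.unitaryGroup (Fin 2) ℂ := by
  rw [Matrix.mem_unitaryGroup_iff]
  ext i j
  fin_cases i <;> fin_cases j <;>
    simp [eiZ, Matrix.mul_apply, Fin.sum_univ_two, ← Complex.exp_add,
      conj_exp₁, conj_exp₂, Matrix.conjTranspose_apply, Matrix.one_apply]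

lemma eiZ_det' (ψ : ℝ) : (eiZ ψ).det = 1 := by
  simp [eiZ, Matrix.det_fin_two_of, ← Complex.exp_add]

lemma sqrt_sq'' {x : ℝ} (hx : x ∈ Set.Icc (-1 : ℝ) 1) :
    ((Real.sqrt (1 - x ^ 2) : ℝ) : ℂ) * ((Real.sqrt (1 - x ^ 2) : ℝ) : ℂ) = 1 - (x : ℂ) ^ 2 := by
  obtain ⟨h1, h2⟩ := hx
  have h : (0:ℝ) ≤ 1 - x ^ 2 := by nlinarith
  rw [← Complex.ofReal_mul, Real.mul_self_sqrt h]
  push_cast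
  ring

lemma Wx_mem' {x : ℝ} (hx : x ∈ Set.Icc (-1 : ℝ) 1) : Wx x ∈ Matrix.unitaryGroup (Fin 2) ℂ := by
  have hs := sqrt_sq'' hx
  have hI := Complex.I_sq
  rw [Matrix.mem_unitaryGroup_iff]
  ext i j
  fin_cases i <;> fin_cases j <;>
    simp [Wx, Matrix.mul_apply, Fin.sum_univ_two, Matrix.conjTranspose_apply,
      Matrix.one_apply, Complex.conj_ofReal] <;>
    first
      | ring1
      | linear_combination hs - (((Real.sqrt (1 - x ^ 2) : ℝ) : ℂ) * ((Real.sqrt (1 - x ^ 2) : ℝ) : ℂ)) * hI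
      | linear_combination - hs + (((Real.sqrt (1 - x ^ 2) : ℝ) : ℂ) * ((Real.sqrt (1 - x ^ 2) : ℝ) : ℂ)) * hI

lemma Wx_det' {x : ℝ} (hx : x ∈ Set.Icc (-1 : ℝ) 1) : (Wx x).det = 1 := by
  have hs := sqrt_sq'' hx
  have hI := Complex.I_sq
  simp [Wx, Matrix.det_fin_two_of]
  first
    | linear_combination hs - (((Real.sqrt (1 - x ^ 2) : ℝ) : ℂ) * ((Real.sqrt (1 - x ^ 2) : ℝ) : ℂ)) * hI
    | linear_combination - hs + (((Real.sqrt (1 - x ^ 2) : ℝ) : ℂ) * ((Real.sqrt (1 - x ^ 2) : ℝ) : ℂ)) * hI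

def Bnd (P : Polynomial ℂ) (k : ℕ) : Prop := ∀ n, P.coeff n ≠ 0 → n ≤ k ∧ n % 2 = k % 2

lemma Bnd_zero' (k : ℕ) : Bnd 0 k := by intro n h; simp at h

lemma Bnd_C' (c : ℂ) : Bnd (Polynomial.C c) 0 := by
  intro n h
  rcases eq_or_ne n 0 with rfl | hn
  · simp
  · rw [Polynomial.coeff_C, if_neg hn] at h; exact absurd rfl h

lemma Bnd_X' : Bnd (Polynomial.X : Polynomial ℂ) 1 := by
  intro n h
  rcases eq_or_ne n 1 with rfl | hn
  · simp
  · rw [Polynomial.coeff_X, if_neg (fun hh => hn hh.symm)] at h; exact absurd rfl h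

lemma Bnd_one_sub_X_sq' : Bnd (1 - Polynomial.X ^ 2 : Polynomial ℂ) 2 := by
  intro n h
  rcases eq_or_ne n 0 with rfl | h0
  · exact ⟨by norm_num, by norm_num⟩
  rcases eq_or_ne n 2 with rfl | h2
  · exact ⟨le_refl _, rfl⟩
  exfalso
  apply h
  rw [Polynomial.coeff_sub, Polynomial.coeff_one, if_neg h0,
    Polynomial.coeff_X_pow, if_neg h2]
  ring

lemma Bnd_add' {P Q : Polynomial ℂ} {k : ℕ} (hP : Bnd P k) (hQ : Bnd Q k) : Bnd (P + Q) k := by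
  intro n h
  rw [Polynomial.coeff_add] at h
  by_cases hp : P.coeff n = 0
  · exact hQ n (by intro hq; apply h; rw [hp, hq, add_zero])
  · exact hP n hp

lemma Bnd_sub' {P Q : Polynomial ℂ} {k : ℕ} (hP : Bnd P k) (hQ : Bnd Q k) : Bnd (P - Q) k := by
  intro n h
  rw [Polynomial.coeff_sub] at h
  by_cases hp : P.coeff n = 0
  · exact hQ n (by intro hq; apply h; rw [hp, hq, sub_zero])
  · exact hP n hp

lemma Bnd_mul' {P Q : Polynomial ℂ} {a b : ℕ} (hP : Bnd P a) (hQ : Bnd Q b) :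
    Bnd (P * Q) (a + b) := by
  intro n h
  rw [Polynomial.coeff_mul] at h
  obtain ⟨⟨i, j⟩, hij, hne⟩ := Finset.exists_ne_zero_of_sum_ne_zero h
  rw [Finset.HasAntidiagonal.mem_antidiagonal] at hij
  have hi := hP i (by intro hh; apply hne; simp [hh])
  have hj := hQ j (by intro hh; apply hne; simp [hh])
  subst hij
  omega

lemma Bnd_map_conj' {P : Polynomial ℂ} {k : ℕ} (hP : Bnd P k) :
    Bnd (P.map (starRingEnd ℂ)) k := by
  intro n h
  rw [Polynomial.coeff_map] at h
  exact hP n (by intro hh; apply h; rw [hh]; simp)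

lemma Bnd_of_X_mul' {Q : Polynomial ℂ} {k : ℕ} (h : Bnd (Polynomial.X * Q) (k + 1)) :
    Bnd Q k := by
  intro n hn
  have := h (n + 1) (by rwa [Polynomial.coeff_X_mul])
  omega

lemma Bnd_cast {P : Polynomial ℂ} {k k' : ℕ} (h : Bnd P k) (e : k = k') : Bnd P k' := e ▸ h

lemma qsp_aux (d : ℕ) (Ψ : Fin (d + 1) → ℝ) :
    ∃ P Q : Polynomial ℂ, Bnd P d ∧ Bnd (Polynomial.X * Q) d ∧
      ∀ x : ℝ, x ∈ Set.Icc (-1 : ℝ) 1 →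
        Ud d Ψ x = !![P.eval (x : ℂ), Complex.I * Q.eval (x : ℂ) * Real.sqrt (1 - x ^ 2);
          Complex.I * (Q.map (starRingEnd ℂ)).eval (x : ℂ) * Real.sqrt (1 - x ^ 2),
          (P.map (starRingEnd ℂ)).eval (x : ℂ)] := by
  induction d with
  | zero =>
    refine ⟨Polynomial.C (Complex.exp (Complex.I * Ψ 0)), 0, ?_, ?_, ?_⟩
    · exact Bnd_C' _
    · simpa using Bnd_zero' 0
    · intro x hx
      rw [Ud_zero']
      ext i j
      fin_cases i <;> fin_cases j <;>
        simp [eiZ, Polynomial.map_C, conj_exp₁]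
  | succ d ih =>
    obtain ⟨P2, Q2, hP2, hQ2, hM⟩ := ih (fun j => Ψ j.succ)
    refine ⟨Polynomial.C (Complex.exp (Complex.I * Ψ 0)) * Polynomial.X * P2
        - (1 - Polynomial.X ^ 2) * Polynomial.C (Complex.exp (Complex.I * Ψ 0)) * (Q2.map (starRingEnd ℂ)),
      Polynomial.C (Complex.exp (Complex.I * Ψ 0)) * Polynomial.X * Q2
        + Polynomial.C (Complex.exp (Complex.I * Ψ 0)) * (P2.map (starRingEnd ℂ)),
      ?_, ?_, ?_⟩
    · apply Bnd_sub'
      · exact Bnd_cast (Bnd_mul' (Bnd_mul' (Bnd_C' _) Bnd_X') hP2) (by omega)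
      · have hQ2c : Bnd (Polynomial.X * Q2.map (starRingEnd ℂ)) d := by
          have h := Bnd_map_conj' hQ2
          rwa [Polynomial.map_mul, Polynomial.map_X] at h
        apply Bnd_of_X_mul'
        have h2 : Bnd ((1 - Polynomial.X ^ 2) * Polynomial.C (Complex.exp (Complex.I * Ψ 0))
            * (Polynomial.X * Q2.map (starRingEnd ℂ))) (d + 2) :=
          Bnd_cast (Bnd_mul' (Bnd_mul' Bnd_one_sub_X_sq' (Bnd_C' _)) hQ2c) (by omega)
        exact (show Polynomial.X * ((1 - Polynomial.X ^ 2) * Polynomial.C (Complex.exp (Complex.I * Ψ 0))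
            * (Q2.map (starRingEnd ℂ)))
          = (1 - Polynomial.X ^ 2) * Polynomial.C (Complex.exp (Complex.I * Ψ 0))
            * (Polynomial.X * Q2.map (starRingEnd ℂ)) by ring) ▸ h2
    · have h1 : Bnd (Polynomial.C (Complex.exp (Complex.I * Ψ 0)) * Polynomial.X * (Polynomial.X * Q2)) (d + 1) :=
        Bnd_cast (Bnd_mul' (Bnd_mul' (Bnd_C' _) Bnd_X') hQ2) (by omega)
      have h2 : Bnd (Polynomial.C (Complex.exp (Complex.I * Ψ 0)) * Polynomial.X * (P2.map (starRingEnd ℂ))) (d + 1) :=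
        Bnd_cast (Bnd_mul' (Bnd_mul' (Bnd_C' _) Bnd_X') (Bnd_map_conj' hP2)) (by omega)
      have h3 := Bnd_add' h1 h2
      exact (show Polynomial.X * (Polynomial.C (Complex.exp (Complex.I * Ψ 0)) * Polynomial.X * Q2
          + Polynomial.C (Complex.exp (Complex.I * Ψ 0)) * (P2.map (starRingEnd ℂ)))
        = Polynomial.C (Complex.exp (Complex.I * Ψ 0)) * Polynomial.X * (Polynomial.X * Q2)
          + Polynomial.C (Complex.exp (Complex.I * Ψ 0)) * Polynomial.X * (P2.map (starRingEnd ℂ)) by ring) ▸ h3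
    · intro x hx
      have hs := sqrt_sq'' hx
      have hI := Complex.I_sq
      rw [Ud_succ', hM x hx]
      ext i j
      fin_cases i <;> fin_cases j <;>
        simp [eiZ, Wx, Matrix.mul_apply, Fin.sum_univ_two, eval_map_conj',
          Complex.conj_ofReal, conj_exp₁, conj_exp₂] <;>
        first
          | ring1
          | linear_combination
              (-(Complex.exp (Complex.I * (Ψ 0 : ℝ)) * (starRingEnd ℂ) (Q2.eval (x:ℂ)))) * hs
              + (Complex.exp (Complex.I * (Ψ 0 : ℝ)) * (starRingEnd ℂ) (Q2.eval (x:ℂ))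
                  * ((Real.sqrt (1 - x ^ 2) : ℝ) : ℂ) * ((Real.sqrt (1 - x ^ 2) : ℝ) : ℂ)) * hI
          | linear_combination
              (-(Complex.exp (-(Complex.I * (Ψ 0 : ℝ))) * Q2.eval (x:ℂ))) * hs
              + (Complex.exp (-(Complex.I * (Ψ 0 : ℝ))) * Q2.eval (x:ℂ)
                  * ((Real.sqrt (1 - x ^ 2) : ℝ) : ℂ) * ((Real.sqrt (1 - x ^ 2) : ℝ) : ℂ)) * hI
          | skip

lemma Ud_unitary (d : ℕ) (Ψ : Fin (d + 1) → ℝ) :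
    ∀ x ∈ Set.Icc (-1 : ℝ) 1,
      Ud d Ψ x ∈ Matrix.unitaryGroup (Fin 2) ℂ ∧ (Ud d Ψ x).det = 1 := by
  induction d with
  | zero =>
    intro x hx
    rw [Ud_zero']
    exact ⟨eiZ_mem' _, eiZ_det' _⟩
  | succ d ih =>
    intro x hx
    rw [Ud_succ']
    refine ⟨mul_mem (mul_mem (eiZ_mem' _) (Wx_mem' hx)) ((ih (fun j => Ψ j.succ) x hx).1), ?_⟩
    rw [Matrix.det_mul, Matrix.det_mul, eiZ_det', Wx_det' hx,
      (ih (fun j => Ψ j.succ) x hx).2]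
    ring

end aux

theorem qsp_structure (d : ℕ) (Ψ : Fin (d + 1) → ℝ)
    (hΨ : ∀ k, Ψ k ∈ Set.Ico (-Real.pi) Real.pi) :
    (∀ x ∈ Set.Icc (-1 : ℝ) 1,
      Ud d Ψ x ∈ Matrix.unitaryGroup (Fin 2) ℂ ∧ (Ud d Ψ x).det = 1) ∧
    ∃ P Q : Polynomial ℂ,
      P.degree ≤ d ∧ HasParity P d ∧
      Q.degree ≤ ((d - 1 : ℕ) : WithBot ℕ) ∧ HasParity Q (d - 1) ∧
      (∀ x ∈ Set.Icc (-1 : ℝ) 1,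
        Ud d Ψ x 0 0 = P.eval (x : ℂ) ∧
        Ud d Ψ x 0 1 = Complex.I * Q.eval (x : ℂ) * Real.sqrt (1 - x ^ 2) ∧
        ‖P.eval (x : ℂ)‖ ^ 2
          + (1 - x ^ 2) * ‖Q.eval (x : ℂ)‖ ^ 2 = 1) := by
  obtain ⟨P, Q, hP, hQ, hM⟩ := qsp_aux d Ψ
  refine ⟨Ud_unitary d Ψ, P, Q, ?_, ?_, ?_, ?_, ?_⟩
  · rw [Polynomial.degree_le_iff_coeff_zero]
    intro m hm
    by_contra h
    have h2 := (hP m h).1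
    have h3 : (d : WithBot ℕ) < (m : ℕ) := hm
    have : d < m := by exact_mod_cast h3
    omega
  · intro n hn
    exact (hP n hn).2
  · rw [Polynomial.degree_le_iff_coeff_zero]
    intro m hm
    by_contra h
    have h2 := hQ (m + 1) (by rwa [Polynomial.coeff_X_mul])
    have h3 : ((d - 1 : ℕ) : WithBot ℕ) < (m : ℕ) := hm
    have : d - 1 < m := by exact_mod_cast h3
    omega
  · intro n hn
    have h2 := hQ (n + 1) (by rwa [Polynomial.coeff_X_mul])
    omega
  · intro x hx
    have hnn : (0:ℝ) ≤ 1 - x ^ 2 := by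
      obtain ⟨h1, h2⟩ := hx; nlinarith
    refine ⟨by rw [hM x hx]; simp, by rw [hM x hx]; simp, ?_⟩
    have hu := (Ud_unitary d Ψ x hx).1
    rw [Matrix.mem_unitaryGroup_iff] at hu
    rw [hM x hx] at hu
    have h00 := congrFun (congrFun hu 0) 0
    simp [Matrix.mul_apply, Fin.sum_univ_two, Matrix.one_apply,
      Matrix.conjTranspose_apply, Matrix.star_apply, Complex.conj_ofReal,
      Complex.mul_conj, Complex.normSq_mul, Complex.normSq_I] at h00
    rw [Complex.sq_norm, Complex.sq_norm]
    have hss : Real.sqrt (1 - x ^ 2) * Real.sqrt (1 - x ^ 2) = 1 - x ^ 2 :=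
      Real.mul_self_sqrt hnn
    rw [← Complex.ofReal_mul, hss] at h00
    have h01 : Complex.normSq (P.eval (x:ℂ))
        + Complex.normSq (Q.eval (x:ℂ)) * (1 - x ^ 2) = 1 := by exact_mod_cast h00
    linarith [h01]
end

section
/- (QSP with real target polynomials) Let f ∈ ℝ[x] be a polynomial of degree d ≥ 1 with parity d mod 2 and with sup_{x∈[-1,1]} |f(x)| ≤ 1. Then there exist P, Q ∈ ℂ[x] with deg P ≤ d, deg Q ≤ d-1, P of parity d mod 2, Q of parity (d-1) mod 2, satisfying |P(x)|² + (1-x²)|Q(x)|² = 1 on [-1,1], such that f(x) = Re[P(x)] for all x. -/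
open Polynomial Complex

/-- A real polynomial has parity `p` if all nonzero coefficients occur in
degrees `≡ p [MOD 2]`. -/
def HasParityR (f : Polynomial ℝ) (p : ℕ) : Prop :=
  ∀ n : ℕ, f.coeff n ≠ 0 → n % 2 = p % 2

namespace QSPaux

lemma parity_congr {f : ℝ[X]} {a b : ℕ} (h : a % 2 = b % 2) (hf : HasParityR f a) :
    HasParityR f b := fun n hn => (hf n hn).trans h

lemma parity_zero (p : ℕ) : HasParityR 0 p := fun n hn => by simp at hn

lemma parity_C (c : ℝ) : HasParityR (C c) 0 := by
  intro n hn
  rw [coeff_C] at hn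
  rcases eq_or_ne n 0 with rfl | h
  · rfl
  · simp [h] at hn

lemma parity_one : HasParityR 1 0 := by simpa using parity_C 1

lemma parity_X : HasParityR (X : ℝ[X]) 1 := by
  intro n hn
  rw [coeff_X] at hn
  rcases eq_or_ne n 1 with rfl | h
  · rfl
  · simp [Ne.symm h] at hn

lemma parity_add {f g : ℝ[X]} {p : ℕ} (hf : HasParityR f p) (hg : HasParityR g p) :
    HasParityR (f + g) p := by
  intro n hn
  rw [coeff_add] at hn
  by_cases h : f.coeff n = 0
  · exact hg n (by simpa [h] using hn)
  · exact hf n h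

lemma parity_neg {f : ℝ[X]} {p : ℕ} (hf : HasParityR f p) : HasParityR (-f) p := by
  intro n hn
  exact hf n (by simpa using hn)

lemma parity_sub {f g : ℝ[X]} {p : ℕ} (hf : HasParityR f p) (hg : HasParityR g p) :
    HasParityR (f - g) p := by
  rw [sub_eq_add_neg]; exact parity_add hf (parity_neg hg)

lemma parity_mul {f g : ℝ[X]} {p q : ℕ} (hf : HasParityR f p) (hg : HasParityR g q) :
    HasParityR (f * g) (p + q) := by
  intro n hn
  rw [coeff_mul] at hn
  obtain ⟨⟨i, j⟩, hij, hne⟩ := Finset.exists_ne_zero_of_sum_ne_zero hn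
  rw [Finset.HasAntidiagonal.mem_antidiagonal] at hij
  have hi := hf i (fun h => hne (by simp [h]))
  have hj := hg j (fun h => hne (by simp [h]))
  subst hij
  omega

lemma parity_C_mul {f : ℝ[X]} {p : ℕ} (c : ℝ) (hf : HasParityR f p) :
    HasParityR (C c * f) p := by
  intro n hn
  rw [coeff_C_mul] at hn
  exact hf n (fun h => hn (by simp [h]))

lemma parity_X_sq : HasParityR (X ^ 2 : ℝ[X]) 0 := by
  rw [pow_two]
  exact parity_congr rfl (parity_mul parity_X parity_X)

lemma parity_one_sub_X_sq : HasParityR (1 - X ^ 2 : ℝ[X]) 0 :=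
  parity_sub parity_one parity_X_sq

/-- The representation predicate. -/
def Rep (g : ℝ[X]) (τ : ℕ) : Prop :=
  ∃ A B : ℝ[X], g = A ^ 2 + (1 - X ^ 2) * B ^ 2 ∧ HasParityR A τ ∧ HasParityR B (τ + 1) ∧
    A.degree + A.degree ≤ g.degree ∧ B.degree + B.degree + 2 ≤ g.degree

lemma degree_one_sub_X_sq : (1 - X ^ 2 : ℝ[X]).degree = 2 := by
  have h : (1 - X ^ 2 : ℝ[X]) = -(X ^ 2 - C 1) := by
    rw [map_one]; ring
  rw [h, degree_neg, degree_X_pow_sub_C (by norm_num)]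
  rfl

lemma sup_double {x y F : WithBot ℕ} (hx : x + x ≤ F) (hy : y + y ≤ F) :
    (x ⊔ y) + (x ⊔ y) ≤ F := by
  rcases le_total x y with h | h
  · rwa [sup_eq_right.mpr h]
  · rwa [sup_eq_left.mpr h]

lemma Rep.mul {F G : ℝ[X]} {σ τ : ℕ} (hF : Rep F σ) (hG : Rep G τ) :
    Rep (F * G) (σ + τ) := by
  obtain ⟨A₁, B₁, hid₁, hpA₁, hpB₁, hdA₁, hdB₁⟩ := hF
  obtain ⟨A₂, B₂, hid₂, hpA₂, hpB₂, hdA₂, hdB₂⟩ := hG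
  have hFG : (F * G).degree = F.degree + G.degree := degree_mul
  refine ⟨A₁ * A₂ - (1 - X ^ 2) * (B₁ * B₂), A₁ * B₂ + B₁ * A₂, ?_, ?_, ?_, ?_, ?_⟩
  · rw [hid₁, hid₂]; ring
  · apply parity_sub (parity_mul hpA₁ hpA₂)
    have := parity_mul parity_one_sub_X_sq (parity_mul hpB₁ hpB₂)
    exact parity_congr (by omega) this
  · apply parity_add (parity_mul hpA₁ hpB₂)
    exact parity_congr (by omega) (parity_mul hpB₁ hpA₂)
  · have h := degree_sub_le (A₁ * A₂) ((1 - X ^ 2) * (B₁ * B₂))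
    rw [degree_mul, degree_mul, degree_mul, degree_one_sub_X_sq] at h
    rw [hFG]
    refine le_trans (add_le_add h h) (sup_double ?_ ?_)
    · calc A₁.degree + A₂.degree + (A₁.degree + A₂.degree)
          = (A₁.degree + A₁.degree) + (A₂.degree + A₂.degree) := by
            rw [add_add_add_comm]
        _ ≤ F.degree + G.degree := add_le_add hdA₁ hdA₂
    · calc 2 + (B₁.degree + B₂.degree) + (2 + (B₁.degree + B₂.degree))
          = (B₁.degree + B₁.degree + 2) + (B₂.degree + B₂.degree + 2) := by
            abel
        _ ≤ F.degree + G.degree := add_le_add hdB₁ hdB₂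
  · have h := degree_add_le (A₁ * B₂) (B₁ * A₂)
    rw [degree_mul, degree_mul] at h
    rw [hFG]
    refine le_trans (add_le_add_left (add_le_add h h) 2) ?_
    rcases le_total (A₁.degree + B₂.degree) (B₁.degree + A₂.degree) with h' | h'
    · rw [sup_eq_right.mpr h']
      calc B₁.degree + A₂.degree + (B₁.degree + A₂.degree) + 2
          = (B₁.degree + B₁.degree + 2) + (A₂.degree + A₂.degree) := by abel
        _ ≤ F.degree + G.degree := add_le_add hdB₁ hdA₂
    · rw [sup_eq_left.mpr h']
      calc A₁.degree + B₂.degree + (A₁.degree + B₂.degree) + 2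
          = (A₁.degree + A₁.degree) + (B₂.degree + B₂.degree + 2) := by abel
        _ ≤ F.degree + G.degree := add_le_add hdA₁ hdB₂

end QSPaux

section
open Polynomial
namespace QSPaux

lemma degree_C_mul_le (c : ℝ) (p : ℝ[X]) : (C c * p).degree ≤ p.degree :=
  le_trans (degree_mul_le _ _) (by simpa using add_le_add degree_C_le (le_refl p.degree))

lemma Rep.sq {A : ℝ[X]} {τ : ℕ} (hp : HasParityR A τ) : Rep (A ^ 2) τ := by
  refine ⟨A, 0, by ring, hp, parity_zero _, ?_, ?_⟩
  · rw [degree_pow, two_nsmul]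
  · simp

lemma Rep.const {c : ℝ} (hc : 0 < c) : Rep (C c) 0 := by
  refine ⟨C (Real.sqrt c), 0, ?_, parity_C _, parity_zero _, ?_, ?_⟩
  · rw [← C_pow, Real.sq_sqrt hc.le]; ring
  · rw [degree_C (by positivity : Real.sqrt c ≠ 0), degree_C hc.ne']
    simp
  · simp

lemma Rep.one_sub_X_sq : Rep (1 - X ^ 2 : ℝ[X]) 1 := by
  refine ⟨0, 1, by ring, parity_zero _, parity_congr (by norm_num) parity_one, ?_, ?_⟩
  · simp
  · rw [degree_one, degree_one_sub_X_sq]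
    norm_num

lemma degree_C_sub_X_sq (c : ℝ) : (C c - X ^ 2 : ℝ[X]).degree = 2 := by
  have h : (C c - X ^ 2 : ℝ[X]) = -(X ^ 2 - C c) := by ring
  rw [h, degree_neg, degree_X_pow_sub_C (by norm_num)]
  rfl

/-- exterior pair factor: `c - x²` with `c ≥ 1`. -/
lemma Rep.c_sub_X_sq {c : ℝ} (hc : 1 ≤ c) : Rep (C c - X ^ 2) 1 := by
  refine ⟨C (Real.sqrt (c - 1)) * X, C (Real.sqrt c), ?_, ?_, ?_, ?_, ?_⟩
  · have h1 : (C (Real.sqrt (c - 1)) * X : ℝ[X]) ^ 2 = C (c - 1) * X ^ 2 := by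
      rw [mul_pow, ← C_pow, Real.sq_sqrt (by linarith)]
    have h2 : (C (Real.sqrt c) : ℝ[X]) ^ 2 = C c := by
      rw [← C_pow, Real.sq_sqrt (by linarith)]
    rw [h1, h2, C_sub, map_one]
    ring
  · exact parity_C_mul _ parity_X
  · exact parity_congr (by norm_num) (parity_C _)
  · refine le_trans (add_le_add (degree_C_mul_le _ _) (degree_C_mul_le _ _)) ?_
    rw [degree_C_sub_X_sq, degree_X]
    decide
  · refine le_trans (add_le_add_left (add_le_add degree_C_le degree_C_le) 2) ?_
    rw [degree_C_sub_X_sq]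
    decide

lemma degree_X_sq_add_C (e : ℝ) : (X ^ 2 + C e : ℝ[X]).degree = 2 := by
  rw [degree_add_eq_left_of_degree_lt, degree_X_pow]
  · rfl
  · rw [degree_X_pow]
    exact lt_of_le_of_lt degree_C_le (by decide)

/-- pure imaginary pair factor: `x² + e` with `e ≥ 0`. -/
lemma Rep.X_sq_add_C {e : ℝ} (he : 0 ≤ e) : Rep (X ^ 2 + C e) 1 := by
  refine ⟨C (Real.sqrt (1 + e)) * X, C (Real.sqrt e), ?_, ?_, ?_, ?_, ?_⟩
  · have h1 : (C (Real.sqrt (1 + e)) * X : ℝ[X]) ^ 2 = C (1 + e) * X ^ 2 := by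
      rw [mul_pow, ← C_pow, Real.sq_sqrt (by linarith)]
    have h2 : (C (Real.sqrt e) : ℝ[X]) ^ 2 = C e := by
      rw [← C_pow, Real.sq_sqrt he]
    rw [h1, h2, C_add, map_one]
    ring
  · exact parity_C_mul _ parity_X
  · exact parity_congr (by norm_num) (parity_C _)
  · refine le_trans (add_le_add (degree_C_mul_le _ _) (degree_C_mul_le _ _)) ?_
    rw [degree_X_sq_add_C, degree_X]
    decide
  · refine le_trans (add_le_add_left (add_le_add degree_C_le degree_C_le) 2) ?_
    rw [degree_X_sq_add_C]
    decide

lemma degree_quartic (u v : ℝ) :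
    (X ^ 4 - C (2 * u) * X ^ 2 + C (u ^ 2 + v ^ 2) : ℝ[X]).degree = 4 := by
  have h1 : (X ^ 4 - C (2 * u) * X ^ 2 + C (u ^ 2 + v ^ 2) : ℝ[X])
      = X ^ 4 + (C (u ^ 2 + v ^ 2) - C (2 * u) * X ^ 2) := by ring
  rw [h1, degree_add_eq_left_of_degree_lt, degree_X_pow]
  · rfl
  rw [degree_X_pow]
  have hc : (C (u ^ 2 + v ^ 2) : ℝ[X]).degree < (4 : ℕ) :=
    lt_of_le_of_lt degree_C_le (by decide)
  have hm : (C (2 * u) * X ^ 2 : ℝ[X]).degree < (4 : ℕ) := by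
    refine lt_of_le_of_lt (degree_C_mul_le _ _) ?_
    rw [degree_X_pow]
    decide
  exact lt_of_le_of_lt (degree_sub_le _ _) (max_lt hc hm)

lemma quartic_id (α β γ u v : ℝ) (h4 : α ^ 2 - β ^ 2 = 1)
    (h2 : 2 * α * γ + β ^ 2 = -(2 * u)) (h0 : γ ^ 2 = u ^ 2 + v ^ 2) :
    (X ^ 4 - C (2 * u) * X ^ 2 + C (u ^ 2 + v ^ 2) : ℝ[X])
      = (C α * X ^ 2 + C γ) ^ 2 + (1 - X ^ 2) * (C β * X) ^ 2 := by
  have expand : ((C α * X ^ 2 + C γ) ^ 2 + (1 - X ^ 2) * (C β * X) ^ 2 : ℝ[X])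
      = C (α ^ 2 - β ^ 2) * X ^ 4 + C (2 * α * γ + β ^ 2) * X ^ 2 + C (γ ^ 2) := by
    simp only [C_sub, C_add, C_mul, C_pow, map_ofNat]
    ring
  rw [expand, h4, h2, h0, map_one, map_neg]
  ring

/-- complex quadruple factor: `x⁴ - 2u x² + (u² + v²)`. -/
lemma Rep.quartic (u v : ℝ) : Rep (X ^ 4 - C (2 * u) * X ^ 2 + C (u ^ 2 + v ^ 2)) 0 := by
  set D : ℝ := u - u ^ 2 - v ^ 2 with hD
  set t : ℝ := 2 * (Real.sqrt (D ^ 2 + v ^ 2) - D) with ht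
  have hsq : Real.sqrt (D ^ 2 + v ^ 2) ^ 2 = D ^ 2 + v ^ 2 := Real.sq_sqrt (by positivity)
  have hDle : D ≤ Real.sqrt (D ^ 2 + v ^ 2) := by
    rcases le_or_gt D 0 with h | h
    · exact le_trans h (Real.sqrt_nonneg _)
    · nlinarith [Real.sqrt_nonneg (D ^ 2 + v ^ 2)]
  have htnn : 0 ≤ t := by rw [ht]; linarith
  have hkey : t ^ 2 + 4 * t * D - 4 * v ^ 2 = 0 := by
    have h' : (t / 2 + D) ^ 2 = D ^ 2 + v ^ 2 := by
      have : t / 2 + D = Real.sqrt (D ^ 2 + v ^ 2) := by rw [ht]; ring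
      rw [this]; exact hsq
    linear_combination 4 * h'
  set α : ℝ := Real.sqrt (1 + t) with hα
  set β : ℝ := Real.sqrt t with hβ
  have hα2 : α ^ 2 = 1 + t := Real.sq_sqrt (by linarith)
  have hβ2 : β ^ 2 = t := Real.sq_sqrt htnn
  have hαpos : 0 < α := Real.sqrt_pos.mpr (by linarith)
  set γ : ℝ := -(2 * u + t) / (2 * α) with hγ
  have h4 : α ^ 2 - β ^ 2 = 1 := by rw [hα2, hβ2]; ring
  have h2 : 2 * α * γ + β ^ 2 = -(2 * u) := by
    rw [hγ, hβ2]
    field_simp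
    ring
  have h0 : γ ^ 2 = u ^ 2 + v ^ 2 := by
    rw [hγ, div_pow, div_eq_iff (by positivity)]
    have hαs : (2 * α) ^ 2 = 4 * (1 + t) := by rw [mul_pow, hα2]; ring
    rw [hαs]
    linear_combination hkey - 4 * t * hD
  refine ⟨C α * X ^ 2 + C γ, C β * X, quartic_id α β γ u v h4 h2 h0, ?_, ?_, ?_, ?_⟩
  · intro n hn
    rcases eq_or_ne n 0 with rfl | h0'
    · rfl
    rcases eq_or_ne n 2 with rfl | h2'
    · rfl
    exfalso
    apply hn
    rw [coeff_add, coeff_C_mul, coeff_X_pow, coeff_C]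
    simp [h2', h0', Ne.symm h2', Ne.symm h0']
  · intro n hn
    rcases eq_or_ne n 1 with rfl | h1'
    · rfl
    exfalso
    apply hn
    rw [coeff_C_mul, coeff_X]
    simp [h1', Ne.symm h1']
  · have hA : (C α * X ^ 2 + C γ).degree ≤ 2 := by
      refine le_trans (degree_add_le _ _) (max_le ?_ ?_)
      · refine le_trans (degree_C_mul_le _ _) ?_
        rw [degree_X_pow]
        decide
      · exact le_trans degree_C_le (by decide)
    rw [degree_quartic]
    exact le_trans (add_le_add hA hA) (by decide)
  · have hB : (C β * X).degree ≤ 1 := by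
      refine le_trans (degree_C_mul_le _ _) ?_
      rw [degree_X]
    rw [degree_quartic]
    exact le_trans (add_le_add_left (add_le_add hB hB) 2) (by decide)

end QSPaux
end

section
open Polynomial Filter Topology Set
namespace QSPaux

lemma coeff_comp_neg_X (p : ℝ[X]) (n : ℕ) :
    (p.comp (-X)).coeff n = (-1) ^ n * p.coeff n := by
  induction p using Polynomial.induction_on' with
  | add p q hp hq => rw [add_comp, coeff_add, hp, hq, coeff_add]; ring
  | monomial k a =>
      have hpow : ((-X : ℝ[X])) ^ k = C ((-1) ^ k) * X ^ k := by
        rw [map_pow, map_neg, map_one, neg_pow]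
      rw [← C_mul_X_pow_eq_monomial, mul_comp, C_comp, pow_comp, X_comp, hpow,
        ← mul_assoc, ← C_mul, coeff_C_mul, coeff_C_mul, coeff_X_pow]
      rcases eq_or_ne n k with rfl | h
      · simp [mul_comm]
      · simp [h]

lemma comp_neg_X_of_parity {g : ℝ[X]} (h : HasParityR g 0) : g.comp (-X) = g := by
  ext n
  rw [coeff_comp_neg_X]
  rcases Nat.even_or_odd n with he | ho
  · rw [he.neg_one_pow, one_mul]
  · have h0 : g.coeff n = 0 := by
      by_contra hne
      have := h n hne
      rcases ho with ⟨k, hk⟩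
      omega
    rw [h0, mul_zero]

lemma parity_of_comp_neg_X {g : ℝ[X]} (h : g.comp (-X) = g) : HasParityR g 0 := by
  intro n hn
  rcases Nat.even_or_odd n with he | ho
  · rcases he with ⟨k, hk⟩
    omega
  · exfalso
    have h2 := congrArg (fun p => Polynomial.coeff p n) h
    simp only [coeff_comp_neg_X, ho.neg_one_pow, neg_one_mul] at h2
    exact hn (by linarith)

lemma eval_neg_of_comp {g : ℝ[X]} (h : g.comp (-X) = g) (x : ℝ) :
    g.eval (-x) = g.eval x := by
  conv_rhs => rw [← h]
  rw [eval_comp, eval_neg, eval_X]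

lemma comp_cancel {F q : ℝ[X]} (hF : F ≠ 0) (hFe : F.comp (-X) = F)
    (hge : (F * q).comp (-X) = F * q) : q.comp (-X) = q := by
  apply mul_left_cancel₀ hF
  rw [← hge, mul_comp, hFe]

/-- accumulation filter avoiding a finite set, inside `Icc (-1) 1`. -/
lemma approach (x₀ : ℝ) (hx : x₀ ∈ Icc (-1 : ℝ) 1) (t : Set ℝ) (ht : t.Finite) :
    ∃ l : Filter ℝ, l.NeBot ∧ l ≤ 𝓝 x₀ ∧ ∀ᶠ y in l, y ∈ Icc (-1 : ℝ) 1 ∧ y ∉ t := by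
  obtain ⟨hx1, hx2⟩ := hx
  have avoid : ∀ (l : Filter ℝ), l ≤ 𝓝 x₀ → (∀ᶠ y in l, y ≠ x₀) →
      ∀ᶠ y in l, y ∉ t := by
    intro l hl hne
    have h1 : ∀ a ∈ t, ∀ᶠ y in l, y ≠ a := by
      intro a ha
      rcases eq_or_ne a x₀ with rfl | haa
      · exact hne
      · have : {y : ℝ | y ≠ a} ∈ 𝓝 x₀ := isOpen_ne.mem_nhds (Ne.symm haa)
        exact hl this
    have h2 := (Set.Finite.eventually_all ht).mpr h1
    filter_upwards [h2] with y hy hyt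
    exact hy y hyt rfl
  rcases lt_or_ge x₀ 1 with hlt | hge
  · refine ⟨𝓝[>] x₀, inferInstance, nhdsWithin_le_nhds, ?_⟩
    have hIoo : Set.Ioo x₀ 1 ∈ 𝓝[>] x₀ := Ioo_mem_nhdsGT_of_mem ⟨le_refl x₀, hlt⟩
    have hne : ∀ᶠ y in 𝓝[>] x₀, y ≠ x₀ := by
      filter_upwards [self_mem_nhdsWithin] with y hy
      exact ne_of_gt hy
    filter_upwards [hIoo, avoid _ nhdsWithin_le_nhds hne] with y hy hyt
    exact ⟨⟨by linarith [hy.1], le_of_lt hy.2⟩, hyt⟩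
  · have hx1' : (-1 : ℝ) < x₀ := by linarith
    refine ⟨𝓝[<] x₀, inferInstance, nhdsWithin_le_nhds, ?_⟩
    have hIoo : Set.Ioo (-1 : ℝ) x₀ ∈ 𝓝[<] x₀ := Ioo_mem_nhdsLT_of_mem ⟨hx1', le_refl x₀⟩
    have hne : ∀ᶠ y in 𝓝[<] x₀, y ≠ x₀ := by
      filter_upwards [self_mem_nhdsWithin] with y hy
      exact ne_of_lt hy
    filter_upwards [hIoo, avoid _ nhdsWithin_le_nhds hne] with y hy hyt
    exact ⟨⟨le_of_lt hy.1, by linarith [hy.2]⟩, hyt⟩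

/-- if `F*q ≥ 0` on the interval and `F ≥ 0` there, `F ≠ 0`, then `q ≥ 0` on the interval. -/
lemma quot_nonneg {F q : ℝ[X]} (hF0 : F ≠ 0)
    (hFnn : ∀ x ∈ Icc (-1 : ℝ) 1, 0 ≤ F.eval x)
    (hg : ∀ x ∈ Icc (-1 : ℝ) 1, 0 ≤ (F * q).eval x) :
    ∀ x ∈ Icc (-1 : ℝ) 1, 0 ≤ q.eval x := by
  intro x₀ hx₀
  obtain ⟨l, hne, hle, hev⟩ := approach x₀ hx₀ {x | F.IsRoot x} (finite_setOf_isRoot hF0)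
  have htend : Tendsto (fun y => q.eval y) l (𝓝 (q.eval x₀)) :=
    (q.continuous.tendsto x₀).mono_left hle
  refine ge_of_tendsto htend ?_
  filter_upwards [hev] with y ⟨hyI, hyr⟩
  have hFpos : 0 < F.eval y := lt_of_le_of_ne (hFnn y hyI) (Ne.symm hyr)
  have := hg y hyI
  rw [eval_mul, mul_comm] at this
  exact nonneg_of_mul_nonneg_left this hFpos

end QSPaux
end

section
open Polynomial Filter Topology Set
namespace QSPaux

noncomputable def cm : ℝ →+* ℂ := algebraMap ℝ ℂ

lemma cm_apply (x : ℝ) : cm x = (x : ℂ) := rfl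

lemma eval_map_real (p : ℝ[X]) (x : ℝ) : (p.map cm).eval (x : ℂ) = ((p.eval x : ℝ) : ℂ) := by
  rw [eval_map]
  exact eval₂_at_apply _ _

lemma eval_map_conj (p : ℝ[X]) (z : ℂ) :
    (p.map cm).eval (starRingEnd ℂ z) = starRingEnd ℂ ((p.map cm).eval z) := by
  rw [eval_map, eval_map, hom_eval₂]
  congr 1
  exact RingHom.ext fun r => by simp [cm]

lemma eval_map_neg {g : ℝ[X]} (h : g.comp (-X) = g) (z : ℂ) :
    (g.map cm).eval (-z) = (g.map cm).eval z := by
  conv_rhs => rw [← h]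
  rw [map_comp]
  rw [eval_comp]
  simp

lemma sq_dvd_interior {g : ℝ[X]} (hg : ∀ x ∈ Icc (-1 : ℝ) 1, 0 ≤ g.eval x) {r : ℝ}
    (h1 : -1 < r) (h2 : r < 1) (h0 : g.eval r = 0) : (X - C r) ^ 2 ∣ g := by
  have hmin : IsLocalMin (fun x => g.eval x) r := by
    have hmem : Set.Ioo (-1 : ℝ) 1 ∈ 𝓝 r := isOpen_Ioo.mem_nhds ⟨h1, h2⟩
    refine Filter.eventually_of_mem hmem fun y hy => ?_
    show g.eval r ≤ g.eval y
    rw [h0]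
    exact hg y ⟨hy.1.le, hy.2.le⟩
  have hder : g.derivative.eval r = 0 := by
    have := hmin.deriv_eq_zero
    rwa [Polynomial.deriv] at this
  obtain ⟨q, hq⟩ := dvd_iff_isRoot.mpr (show g.IsRoot r from h0)
  have hqr : q.eval r = 0 := by
    have hd := congrArg derivative hq
    rw [derivative_mul, derivative_sub, derivative_X, derivative_C, sub_zero, one_mul] at hd
    have he := congrArg (fun p => p.eval r) hd
    simp only [eval_add, eval_mul, eval_sub, eval_X, eval_C, sub_self, zero_mul,
      add_zero, mul_zero, zero_add] at he
    rw [hder] at he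
    linarith [he]
  obtain ⟨q₂, hq₂⟩ := dvd_iff_isRoot.mpr (show q.IsRoot r from hqr)
  exact ⟨q₂, by rw [hq, hq₂]; ring⟩

lemma dvd_mirror {p g : ℝ[X]} (hg : g.comp (-X) = g) (hd : p ∣ g) : p.comp (-X) ∣ g := by
  obtain ⟨c, rfl⟩ := hd
  exact ⟨c.comp (-X), by rw [← mul_comp, hg]⟩

lemma coprime_linear {a b : ℝ} (h : a ≠ b) : IsCoprime (X - C a : ℝ[X]) (X - C b) :=
  isCoprime_X_sub_C_of_isUnit_sub ((sub_ne_zero_of_ne h).isUnit)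

/-- division by a real quadratic with a nonreal root. -/
lemma quad_dvd {g : ℝ[X]} (Φ : ℝ[X]) (hΦ : Φ.Monic) (hdeg : Φ.degree = 2) (z : ℂ)
    (hz : z.im ≠ 0) (hgz : (g.map cm).eval z = 0) (hΦz : (Φ.map cm).eval z = 0) :
    Φ ∣ g := by
  have hmod : g %ₘ Φ + Φ * (g /ₘ Φ) = g := modByMonic_add_div g Φ
  set ρ := g %ₘ Φ with hρ
  have hρdeg : ρ.degree ≤ 1 := by
    have := degree_modByMonic_lt g hΦ
    rw [hdeg] at this
    exact Order.le_of_lt_succ (by exact_mod_cast this)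
  have hρz : (ρ.map cm).eval z = 0 := by
    have he := congrArg (fun p => (p.map cm).eval z) hmod
    simp only [Polynomial.map_add, Polynomial.map_mul, eval_add, eval_mul, hΦz, hgz,
      zero_mul, add_zero] at he
    exact he
  have hform : ρ = C (ρ.coeff 1) * X + C (ρ.coeff 0) := eq_X_add_C_of_degree_le_one hρdeg
  have hc : (ρ.coeff 1 : ℂ) * z + (ρ.coeff 0 : ℂ) = 0 := by
    rw [hform] at hρz
    simpa [cm] using hρz
  have h1 : ρ.coeff 1 = 0 := by
    have him := congrArg Complex.im hc
    simp at him
    rcases him with h | h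
    · exact h
    · exact absurd h hz
  have h0 : ρ.coeff 0 = 0 := by
    rw [h1] at hc
    simpa using hc
  have hρ0 : ρ = 0 := by rw [hform, h1, h0]; simp
  refine ⟨g /ₘ Φ, ?_⟩
  conv_lhs => rw [← hmod]
  rw [hρ0, zero_add]

end QSPaux
end

section
open Polynomial Filter Topology Set
namespace QSPaux

lemma step (n : ℕ)
    (IH : ∀ g : ℝ[X], g.natDegree ≤ n → g ≠ 0 → g.comp (-X) = g →
      (∀ x ∈ Set.Icc (-1 : ℝ) 1, 0 ≤ g.eval x) → ∃ τ, Rep g τ)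
    {g F q : ℝ[X]} {σ : ℕ}
    (hgn : g.natDegree ≤ n + 1) (hg0 : g ≠ 0) (hge : g.comp (-X) = g)
    (hgnn : ∀ x ∈ Set.Icc (-1 : ℝ) 1, 0 ≤ g.eval x)
    (hfac : g = F * q)
    (hFrep : Rep F σ)
    (hFdeg : 2 ≤ F.natDegree)
    (hFe : F.comp (-X) = F)
    (hFnn : ∀ x ∈ Set.Icc (-1 : ℝ) 1, 0 ≤ F.eval x) :
    ∃ τ, Rep g τ := by
  have hF0 : F ≠ 0 := by
    rintro rfl
    simp at hFdeg
  have hq0 : q ≠ 0 := by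
    rintro rfl
    rw [mul_zero] at hfac
    exact hg0 hfac
  have hnd : g.natDegree = F.natDegree + q.natDegree := by
    rw [hfac]; exact natDegree_mul hF0 hq0
  obtain ⟨τ, hrep⟩ := IH q (by omega) hq0
    (comp_cancel hF0 hFe (by rw [← hfac]; exact hge))
    (quot_nonneg hF0 hFnn (fun x hx => by rw [← hfac]; exact hgnn x hx))
  exact ⟨σ + τ, by rw [hfac]; exact hFrep.mul hrep⟩

lemma master (n : ℕ) : ∀ g : ℝ[X], g.natDegree ≤ n → g ≠ 0 → g.comp (-X) = g →
    (∀ x ∈ Set.Icc (-1 : ℝ) 1, 0 ≤ g.eval x) → ∃ τ, Rep g τ := by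
  induction n with
  | zero =>
      intro g hdeg hg0 hge hgnn
      have hC : g = C (g.coeff 0) := eq_C_of_natDegree_le_zero hdeg
      have hc0 : g.coeff 0 ≠ 0 := fun h => hg0 (by rw [hC, h, map_zero])
      have hcpos : 0 < g.coeff 0 := by
        have h1 := hgnn 0 (Set.mem_Icc.mpr ⟨by norm_num, by norm_num⟩)
        rw [coeff_zero_eq_eval_zero] at hc0 ⊢
        exact lt_of_le_of_ne h1 (Ne.symm hc0)
      exact ⟨0, by rw [hC]; exact Rep.const hcpos⟩
  | succ n IH =>
      intro g hdeg hg0 hge hgnn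
      rcases le_or_gt g.natDegree n with hle | hgt
      · exact IH g hle hg0 hge hgnn
      have hndpos : 0 < g.natDegree := by omega
      have hdpos : 0 < (g.map cm).degree := by
        rw [degree_map_eq_of_injective cm.injective]
        exact natDegree_pos_iff_degree_pos.mp hndpos
      obtain ⟨z, hz⟩ := Complex.exists_root hdpos
      have hz' : (g.map cm).eval z = 0 := hz
      by_cases him : z.im = 0
      · -- real root
        set r := z.re with hr
        have hzr : z = (r : ℂ) := Complex.ext rfl (by simp [him])
        have hr0 : g.eval r = 0 := by
          have : (g.map cm).eval (r : ℂ) = 0 := by rw [← hzr]; exact hz'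
          rw [eval_map_real] at this
          exact_mod_cast this
        rcases lt_trichotomy |r| 1 with habs | habs | habs
        · -- interior
          rcases abs_lt.mp habs with ⟨hrl, hrr⟩
          by_cases hrz : r = 0
          · -- factor X^2
            have hdvd : (X : ℝ[X]) ^ 2 ∣ g := by
              rw [X_pow_dvd_iff]
              intro d hd
              interval_cases d
              · rw [coeff_zero_eq_eval_zero]
                rw [hrz] at hr0
                exact hr0
              · by_contra hne
                have := parity_of_comp_neg_X hge 1 hne
                omega
            obtain ⟨q, hq⟩ := hdvd
            refine step n IH (σ := 1) hdeg hg0 hge hgnn hq ?_ ?_ ?_ ?_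
            · exact Rep.sq parity_X
            · rw [natDegree_X_pow]
            · rw [pow_comp, X_comp]; ring
            · intro x hx
              rw [eval_pow, eval_X]
              positivity
          · -- factor (X^2 - r^2)^2
            have hd1 : (X - C r) ^ 2 ∣ g := sq_dvd_interior hgnn hrl hrr hr0
            have hcomp : ((X - C r) ^ 2).comp (-X) = (X - C (-r)) ^ 2 := by
              rw [pow_comp, sub_comp, X_comp, C_comp, map_neg]; ring
            have hd2 : (X - C (-r)) ^ 2 ∣ g := by
              have := dvd_mirror hge hd1
              rwa [hcomp] at this
            have hcop : IsCoprime ((X - C r) ^ 2) ((X - C (-r)) ^ 2) :=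
              (coprime_linear (by intro h; apply hrz; linarith)).pow
            obtain ⟨q, hq⟩ := hcop.mul_dvd hd1 hd2
            have hprod : (X - C r) ^ 2 * (X - C (-r)) ^ 2 = (X ^ 2 - C (r ^ 2)) ^ 2 := by
              rw [map_neg, show (C (r ^ 2) : ℝ[X]) = C r ^ 2 from C_pow]
              ring
            rw [hprod] at hq
            refine step n IH (σ := 0) hdeg hg0 hge hgnn hq ?_ ?_ ?_ ?_
            · exact Rep.sq (parity_sub parity_X_sq (parity_C _))
            · rw [natDegree_pow, natDegree_X_pow_sub_C]
              norm_num
            · rw [pow_comp, sub_comp, pow_comp, X_comp, C_comp]; ring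
            · intro x hx
              rw [eval_pow]
              positivity
        · -- boundary roots ±1
          have h1 : g.eval 1 = 0 ∧ g.eval (-1) = 0 := by
            have hev := eval_neg_of_comp hge 1
            rcases (abs_eq (by norm_num : (0:ℝ) ≤ 1)).mp habs with h | h
            · refine ⟨by rw [← h]; exact hr0, ?_⟩
              rw [hev, ← h]; exact hr0
            · refine ⟨?_, by rw [← h]; exact hr0⟩
              rw [← hev, ← h]; exact hr0
          have hd1 : (X - C 1) ∣ g := dvd_iff_isRoot.mpr h1.1
          have hd2 : (X - C (-1)) ∣ g := dvd_iff_isRoot.mpr h1.2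
          obtain ⟨q, hq⟩ := (coprime_linear (by norm_num)).mul_dvd hd1 hd2
          have hfac : g = (1 - X ^ 2) * (-q) := by
            rw [hq, map_neg, map_one]
            ring
          refine step n IH (σ := 1) hdeg hg0 hge hgnn hfac ?_ ?_ ?_ ?_
          · exact Rep.one_sub_X_sq
          · rw [natDegree_eq_of_degree_eq_some degree_one_sub_X_sq]
          · rw [sub_comp, one_comp, pow_comp, X_comp]; ring
          · intro x hx
            rw [eval_sub, eval_one, eval_pow, eval_X]
            nlinarith [hx.1, hx.2]
        · -- exterior pair
          have hr0' : g.eval (-r) = 0 := by rw [eval_neg_of_comp hge]; exact hr0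
          have hd1 : (X - C r) ∣ g := dvd_iff_isRoot.mpr hr0
          have hd2 : (X - C (-r)) ∣ g := dvd_iff_isRoot.mpr hr0'
          have hrne : r ≠ -r := by
            intro h
            have h0 : r = 0 := by linarith
            rw [h0] at habs
            norm_num at habs
          obtain ⟨q, hq⟩ := (coprime_linear hrne).mul_dvd hd1 hd2
          have hfac : g = (C (r ^ 2) - X ^ 2) * (-q) := by
            rw [hq, map_neg, show (C (r ^ 2) : ℝ[X]) = C r ^ 2 from C_pow]
            ring
          have hr2 : 1 ≤ r ^ 2 := by nlinarith [_root_.sq_abs r]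
          refine step n IH (σ := 1) hdeg hg0 hge hgnn hfac ?_ ?_ ?_ ?_
          · exact Rep.c_sub_X_sq hr2
          · rw [natDegree_eq_of_degree_eq_some (degree_C_sub_X_sq (r ^ 2))]
          · rw [sub_comp, C_comp, pow_comp, X_comp]; ring
          · intro x hx
            rw [eval_sub, eval_C, eval_pow, eval_X]
            nlinarith [hx.1, hx.2]
      · -- nonreal root
        by_cases hre : z.re = 0
        · -- pure imaginary pair
          set e : ℝ := z.im ^ 2 with he
          have hΦz : ((X ^ 2 + C e : ℝ[X]).map cm).eval z = 0 := by
            simp only [Polynomial.map_add, Polynomial.map_pow, Polynomial.map_X,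
              Polynomial.map_C, eval_add, eval_pow, eval_X, eval_C]
            simp only [cm_apply]
            apply Complex.ext <;>
              simp [pow_two, Complex.mul_re, Complex.mul_im, hre, he]
          have hmono : (X ^ 2 + C e : ℝ[X]).Monic :=
            monic_X_pow_add (lt_of_le_of_lt degree_C_le (by decide))
          obtain ⟨q, hq⟩ := quad_dvd _ hmono (degree_X_sq_add_C e) z him hz' hΦz
          refine step n IH (σ := 1) hdeg hg0 hge hgnn hq ?_ ?_ ?_ ?_
          · exact Rep.X_sq_add_C (by positivity)
          · rw [natDegree_eq_of_degree_eq_some (degree_X_sq_add_C e)]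
          · rw [add_comp, pow_comp, X_comp, C_comp]; ring
          · intro x hx
            rw [eval_add, eval_pow, eval_X, eval_C]
            positivity
        · -- full quadruple
          set a : ℝ := z.re with ha
          set b : ℝ := z.im with hb
          have hzne : z ≠ 0 := by
            intro h
            exact him (by rw [hb, h]; simp)
          have hconj1 : (2 * (a : ℂ)) = z + starRingEnd ℂ z := by
            rw [Complex.add_conj]
            push_cast
            ring
          have hconj2 : ((a : ℂ) ^ 2 + (b : ℂ) ^ 2) = z * starRingEnd ℂ z := by
            rw [Complex.mul_conj, Complex.normSq_apply]
            push_cast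
            ring
          have hΦ₁map : ∀ w : ℂ, (((X ^ 2 - C (2 * a) * X + C (a ^ 2 + b ^ 2) : ℝ[X])).map cm).eval w
              = w ^ 2 - 2 * (a : ℂ) * w + ((a : ℂ) ^ 2 + (b : ℂ) ^ 2) := by
            intro w
            simp only [Polynomial.map_add, Polynomial.map_sub, Polynomial.map_mul,
              Polynomial.map_pow, Polynomial.map_X, Polynomial.map_C, eval_add, eval_sub,
              eval_mul, eval_pow, eval_X, eval_C]
            simp only [cm_apply]
            push_cast
            ring
          have hΦ₂map : ∀ w : ℂ, (((X ^ 2 + C (2 * a) * X + C (a ^ 2 + b ^ 2) : ℝ[X])).map cm).eval w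
              = w ^ 2 + 2 * (a : ℂ) * w + ((a : ℂ) ^ 2 + (b : ℂ) ^ 2) := by
            intro w
            simp only [Polynomial.map_add, Polynomial.map_mul,
              Polynomial.map_pow, Polynomial.map_X, Polynomial.map_C, eval_add,
              eval_mul, eval_pow, eval_X, eval_C]
            simp only [cm_apply]
            push_cast
            ring
          have hval : z ^ 2 - 2 * (a : ℂ) * z + ((a : ℂ) ^ 2 + (b : ℂ) ^ 2) = 0 := by
            rw [hconj1, hconj2]
            ring
          have hmono₁ : (X ^ 2 - C (2 * a) * X + C (a ^ 2 + b ^ 2) : ℝ[X]).Monic := by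
            have : (X ^ 2 - C (2 * a) * X + C (a ^ 2 + b ^ 2) : ℝ[X])
                = X ^ 2 + (C (a ^ 2 + b ^ 2) - C (2 * a) * X) := by ring
            rw [this]
            apply monic_X_pow_add
            refine lt_of_le_of_lt (degree_sub_le _ _) (max_lt ?_ ?_)
            · exact lt_of_le_of_lt degree_C_le (by decide)
            · refine lt_of_le_of_lt (degree_C_mul_le _ _) ?_
              rw [degree_X]
              decide
          have hmono₂ : (X ^ 2 + C (2 * a) * X + C (a ^ 2 + b ^ 2) : ℝ[X]).Monic := by
            have : (X ^ 2 + C (2 * a) * X + C (a ^ 2 + b ^ 2) : ℝ[X])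
                = X ^ 2 + (C (a ^ 2 + b ^ 2) + C (2 * a) * X) := by ring
            rw [this]
            apply monic_X_pow_add
            refine lt_of_le_of_lt (degree_add_le _ _) (max_lt ?_ ?_)
            · exact lt_of_le_of_lt degree_C_le (by decide)
            · refine lt_of_le_of_lt (degree_C_mul_le _ _) ?_
              rw [degree_X]
              decide
          have hdeg₁ : (X ^ 2 - C (2 * a) * X + C (a ^ 2 + b ^ 2) : ℝ[X]).degree = 2 := by
            have h₁ : (X ^ 2 - C (2 * a) * X + C (a ^ 2 + b ^ 2) : ℝ[X])
                = X ^ 2 + (C (a ^ 2 + b ^ 2) - C (2 * a) * X) := by ring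
            rw [h₁, degree_add_eq_left_of_degree_lt, degree_X_pow]
            · rfl
            rw [degree_X_pow]
            refine lt_of_le_of_lt (degree_sub_le _ _) (max_lt ?_ ?_)
            · exact lt_of_le_of_lt degree_C_le (by decide)
            · refine lt_of_le_of_lt (degree_C_mul_le _ _) ?_
              rw [degree_X]
              decide
          have hdeg₂ : (X ^ 2 + C (2 * a) * X + C (a ^ 2 + b ^ 2) : ℝ[X]).degree = 2 := by
            have h₁ : (X ^ 2 + C (2 * a) * X + C (a ^ 2 + b ^ 2) : ℝ[X])
                = X ^ 2 + (C (a ^ 2 + b ^ 2) + C (2 * a) * X) := by ring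
            rw [h₁, degree_add_eq_left_of_degree_lt, degree_X_pow]
            · rfl
            rw [degree_X_pow]
            refine lt_of_le_of_lt (degree_add_le _ _) (max_lt ?_ ?_)
            · exact lt_of_le_of_lt degree_C_le (by decide)
            · refine lt_of_le_of_lt (degree_C_mul_le _ _) ?_
              rw [degree_X]
              decide
          obtain ⟨q₁, hq₁⟩ := quad_dvd _ hmono₁ hdeg₁ z him hz' (by rw [hΦ₁map]; exact hval)
          have hgnegz : (g.map cm).eval (-z) = 0 := by rw [eval_map_neg hge]; exact hz'
          have hΦ₁negz : (((X ^ 2 - C (2 * a) * X + C (a ^ 2 + b ^ 2) : ℝ[X])).map cm).eval (-z)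
              = 4 * (a : ℂ) * z := by
            rw [hΦ₁map]
            linear_combination hval
          have hq₁negz : (q₁.map cm).eval (-z) = 0 := by
            have := congrArg (fun p => (p.map cm).eval (-z)) hq₁
            simp only [Polynomial.map_mul, eval_mul] at this
            rw [hgnegz, hΦ₁negz] at this
            have h4az : (4 : ℂ) * (a : ℂ) * z ≠ 0 := by
              apply mul_ne_zero (mul_ne_zero (by norm_num) ?_) hzne
              exact_mod_cast hre
            field_simp at this
            exact (mul_eq_zero.mp this.symm).resolve_left h4az
          have hΦ₂negz : (((X ^ 2 + C (2 * a) * X + C (a ^ 2 + b ^ 2) : ℝ[X])).map cm).eval (-z) = 0 := by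
            rw [hΦ₂map]
            linear_combination hval
          obtain ⟨q, hq⟩ := quad_dvd _ hmono₂ hdeg₂ (-z) (by simpa using him) hq₁negz hΦ₂negz
          set u : ℝ := a ^ 2 - b ^ 2 with hu
          set v : ℝ := 2 * a * b with hv
          have hΨ : (X ^ 2 - C (2 * a) * X + C (a ^ 2 + b ^ 2) : ℝ[X])
              * (X ^ 2 + C (2 * a) * X + C (a ^ 2 + b ^ 2))
              = X ^ 4 - C (2 * u) * X ^ 2 + C (u ^ 2 + v ^ 2) := by
            simp only [hu, hv, C_mul, C_add, C_sub, C_pow, map_ofNat]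
            ring
          have hfac : g = (X ^ 4 - C (2 * u) * X ^ 2 + C (u ^ 2 + v ^ 2)) * q := by
            rw [hq₁, hq, ← mul_assoc, hΨ]
          refine step n IH (σ := 0) hdeg hg0 hge hgnn hfac ?_ ?_ ?_ ?_
          · exact Rep.quartic u v
          · rw [natDegree_eq_of_degree_eq_some (degree_quartic u v)]
            norm_num
          · rw [add_comp, sub_comp, mul_comp, pow_comp, pow_comp, X_comp, C_comp, C_comp]
            ring
          · intro x hx
            have hevalΨ : (X ^ 4 - C (2 * u) * X ^ 2 + C (u ^ 2 + v ^ 2) : ℝ[X]).eval x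
                = (x ^ 2 - u) ^ 2 + v ^ 2 := by
              simp only [eval_add, eval_sub, eval_mul, eval_pow, eval_X, eval_C]
              ring
            rw [hevalΨ]
            positivity

end QSPaux
end

section
open Polynomial Complex
namespace QSPaux

lemma half_deg {A : ℝ[X]} {k : ℕ} (h : A.degree + A.degree ≤ ((2 * k : ℕ) : WithBot ℕ)) :
    A.degree ≤ (k : WithBot ℕ) := by
  by_cases hA : A = 0
  · simp [hA]
  rw [degree_eq_natDegree hA] at h ⊢
  have h2 : A.natDegree + A.natDegree ≤ 2 * k := by exact_mod_cast h
  exact_mod_cast (by omega : A.natDegree ≤ k)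

lemma half_deg' {B : ℝ[X]} {k : ℕ} (hk : 1 ≤ k)
    (h : B.degree + B.degree + 2 ≤ ((2 * k : ℕ) : WithBot ℕ)) :
    B.degree ≤ ((k - 1 : ℕ) : WithBot ℕ) := by
  by_cases hB : B = 0
  · simp [hB]
  rw [degree_eq_natDegree hB] at h ⊢
  have h2 : B.natDegree + B.natDegree + 2 ≤ 2 * k := by exact_mod_cast h
  exact_mod_cast (by omega : B.natDegree ≤ k - 1)

lemma coeff_sq_top {A : ℝ[X]} {d : ℕ} (hdeg : A.natDegree ≤ d) (h : A.coeff d = 0) :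
    (A ^ 2).coeff (2 * d) = 0 := by
  rcases lt_or_eq_of_le hdeg with hlt | heq
  · apply coeff_eq_zero_of_natDegree_lt
    have hnp : (A ^ 2).natDegree = 2 * A.natDegree := natDegree_pow A 2
    omega
  · rw [pow_two, two_mul]
    conv_lhs => rw [← heq]
    rw [coeff_mul_degree_add_degree]
    rw [leadingCoeff, heq, h, mul_zero]

end QSPaux
end

open QSPaux in
theorem qsp_complementary (d : ℕ) (hd : 1 ≤ d) (f : Polynomial ℝ)
    (hdeg : f.natDegree = d) (hpar : HasParityR f d)
    (hbound : ∀ x ∈ Set.Icc (-1 : ℝ) 1, |f.eval x| ≤ 1) :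
    ∃ P Q : Polynomial ℂ,
      P.degree ≤ d ∧ Q.degree ≤ ((d - 1 : ℕ) : WithBot ℕ) ∧
      HasParity P d ∧ HasParity Q (d - 1) ∧
      (∀ x ∈ Set.Icc (-1 : ℝ) 1,
        ‖P.eval (x : ℂ)‖ ^ 2
          + (1 - x ^ 2) * ‖Q.eval (x : ℂ)‖ ^ 2 = 1) ∧
      (∀ x : ℝ, f.eval x = (P.eval (x : ℂ)).re) := by
  classical
  have hf0 : f ≠ 0 := by
    intro h
    rw [h, natDegree_zero] at hdeg
    omega
  set g : ℝ[X] := 1 - f ^ 2 with hgdef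
  have hf2deg : (f ^ 2).degree = ((2 * d : ℕ) : WithBot ℕ) := by
    rw [degree_pow, degree_eq_natDegree hf0, hdeg, two_nsmul]
    exact_mod_cast (by omega : d + d = 2 * d)
  have hgdeg : g.degree = ((2 * d : ℕ) : WithBot ℕ) := by
    rw [hgdef, degree_sub_eq_right_of_degree_lt, hf2deg]
    rw [hf2deg, degree_one]
    exact_mod_cast (by omega : 0 < 2 * d)
  have hgnd : g.natDegree = 2 * d := natDegree_eq_of_degree_eq_some hgdeg
  have hg0 : g ≠ 0 := by
    intro h
    rw [h, natDegree_zero] at hgnd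
    omega
  have hgpar : HasParityR g 0 := by
    have h2 : g = 1 - f * f := by rw [hgdef]; ring
    rw [h2]
    exact parity_sub parity_one (parity_congr (by omega) (parity_mul hpar hpar))
  have hge := comp_neg_X_of_parity hgpar
  have hgnn : ∀ x ∈ Set.Icc (-1 : ℝ) 1, 0 ≤ g.eval x := by
    intro x hx
    have hb := abs_le.mp (hbound x hx)
    rw [hgdef]
    simp only [eval_sub, eval_one, eval_pow]
    nlinarith [hb.1, hb.2]
  obtain ⟨τ, A, B, hid, hpA, hpB, hdA, hdB⟩ := master (2 * d) g (le_of_eq hgnd) hg0 hge hgnn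
  rw [hgdeg] at hdA hdB
  have hAd : A.degree ≤ (d : WithBot ℕ) := half_deg hdA
  have hBd : B.degree ≤ ((d - 1 : ℕ) : WithBot ℕ) := half_deg' hd hdB
  have hAnd : A.natDegree ≤ d := natDegree_le_iff_degree_le.mpr hAd
  have hBnd : B.natDegree ≤ d - 1 := natDegree_le_iff_degree_le.mpr hBd
  have hfcd : f.coeff d ≠ 0 := by
    have h := leadingCoeff_ne_zero.mpr hf0
    rwa [leadingCoeff, hdeg] at h
  have hτ : τ % 2 = d % 2 := by
    by_contra hτ
    have hAc : A.coeff d = 0 := by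
      by_contra hc
      exact hτ (hpA d hc).symm
    have hBc : B.coeff (d - 1) = 0 := by
      by_contra hc
      have h3 := hpB (d - 1) hc
      omega
    have hA2 := coeff_sq_top hAnd hAc
    have hB2 := coeff_sq_top hBnd hBc
    have hB2' : (B ^ 2).coeff (2 * d) = 0 := by
      apply coeff_eq_zero_of_natDegree_lt
      have hnp : (B ^ 2).natDegree = 2 * B.natDegree := natDegree_pow B 2
      omega
    have hgc : g.coeff (2 * d) = 0 := by
      rw [hid, coeff_add, hA2]
      have hsplit : ((1 - X ^ 2) * B ^ 2 : ℝ[X]) = B ^ 2 - X ^ 2 * B ^ 2 := by ring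
      rw [hsplit, coeff_sub, hB2']
      have h2d : 2 * d = 2 * (d - 1) + 2 := by omega
      rw [h2d, coeff_X_pow_mul, hB2]
      norm_num
    have hgc2 : g.coeff (2 * d) = -(f.coeff d ^ 2) := by
      rw [hgdef, coeff_sub, coeff_one, if_neg (by omega : ¬(2 * d = 0))]
      rw [pow_two, two_mul]
      conv_lhs => rw [← hdeg]
      rw [coeff_mul_degree_add_degree, leadingCoeff, hdeg]
      ring
    rw [hgc] at hgc2
    have hsq : f.coeff d ^ 2 = 0 := by linarith
    exact hfcd (pow_eq_zero_iff (by norm_num) |>.mp hsq)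
  have hApar : HasParityR A d := parity_congr hτ hpA
  have hBpar : HasParityR B (d - 1) := parity_congr (by omega) hpB
  refine ⟨f.map cm + C Complex.I * A.map cm, B.map cm, ?_, ?_, ?_, ?_, ?_, ?_⟩
  · refine le_trans (degree_add_le _ _) (max_le ?_ ?_)
    · rw [degree_map_eq_of_injective cm.injective, ← hdeg]
      exact degree_le_natDegree
    · refine le_trans (degree_mul_le _ _) ?_
      rw [degree_map_eq_of_injective cm.injective]
      refine le_trans (add_le_add degree_C_le hAd) ?_
      simp
  · rw [degree_map_eq_of_injective cm.injective]
    exact hBd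
  · intro n hn
    rw [coeff_add, coeff_C_mul, coeff_map, coeff_map] at hn
    by_cases hfz : f.coeff n = 0
    · have hAz : A.coeff n ≠ 0 := by
        intro hAz
        apply hn
        rw [hfz, hAz]
        simp
      exact hApar n hAz
    · exact hpar n hfz
  · intro n hn
    rw [coeff_map] at hn
    refine hBpar n fun h => hn ?_
    rw [h]
    simp
  · intro x hx
    have hPeval : ((f.map cm + C Complex.I * A.map cm).eval (x : ℂ))
        = ((f.eval x : ℝ) : ℂ) + ((A.eval x : ℝ) : ℂ) * Complex.I := by
      rw [eval_add, eval_mul, eval_C, eval_map_real, eval_map_real]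
      ring
    have hQeval : ((B.map cm).eval (x : ℂ)) = ((B.eval x : ℝ) : ℂ) := eval_map_real B x
    rw [hPeval, hQeval, Complex.sq_norm, Complex.normSq_add_mul_I, Complex.norm_real, Real.norm_eq_abs,
      _root_.sq_abs]
    have h5 : 1 - f.eval x ^ 2 = A.eval x ^ 2 + (1 - x ^ 2) * B.eval x ^ 2 := by
      have h6 := congrArg (Polynomial.eval x) hid
      rw [hgdef] at h6
      simpa using h6
    linarith
  · intro x
    rw [eval_add, eval_mul, eval_C, eval_map_real, eval_map_real]
    simp
end

section
/- (Determinant condition for NLFT) For any compactly supported sequence γ: ℤ → ℂ with nonlinear Fourier transform (a,b), the Laurent polynomials a and b satisfy a(z)a*(z) + b(z)b*(z) = 1 for all z ∈ ℂ*, and 0 < a*(0) < ∞ (i.e., a* extends to a function finite and positive at 0). -/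
open Matrix Complex

/-- A single factor of the SU(2) nonlinear Fourier transform:
`(1+|γ|²)^{-1/2} [[1, γ zᵏ],[-conj(γ) z^{-k}, 1]]`. -/
noncomputable def nlftFactor (k : ℤ) (g : ℂ) (z : ℂ) : Matrix (Fin 2) (Fin 2) ℂ :=
  (((1 / Real.sqrt (1 + ‖g‖ ^ 2) : ℝ) : ℂ)) •
    !![1, g * z ^ k; -(starRingEnd ℂ g) * z ^ (-k), 1]

/-- The nonlinear Fourier transform of the finite sequence `γ : Fin n → ℂ`
supported on indices `m, m+1, …, m+n-1`. -/
noncomputable def nlft (m : ℤ) {n : ℕ} (γ : Fin n → ℂ) (z : ℂ) :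
    Matrix (Fin 2) (Fin 2) ℂ :=
  (List.ofFn (fun j : Fin n => nlftFactor (m + (j : ℕ)) (γ j) z)).prod

lemma nlft_zero' (m : ℤ) (γ : Fin 0 → ℂ) (z : ℂ) : nlft m γ z = 1 := by
  simp [nlft]

lemma nlft_succ' (m : ℤ) {n : ℕ} (γ : Fin (n+1) → ℂ) (z : ℂ) :
    nlft m γ z = nlftFactor m (γ 0) z * nlft (m+1) (fun j => γ j.succ) z := by
  unfold nlft
  rw [List.ofFn_succ, List.prod_cons]
  have h1 : (fun i : Fin n => nlftFactor (m + ((i.succ : Fin (n+1)) : ℕ)) (γ i.succ) z)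
      = fun j : Fin n => nlftFactor ((m+1) + (j : ℕ)) ((fun j => γ j.succ) j) z := by
    funext j
    have h2 : (m + ((j.succ : Fin (n+1)) : ℕ) : ℤ) = (m+1) + (j : ℕ) := by
      push_cast [Fin.val_succ]; ring
    rw [h2]
  rw [h1]
  norm_num

lemma mul_conj_abs' (g : ℂ) : g * (starRingEnd ℂ g) = ((‖g‖ : ℂ)) ^ 2 := by
  rw [Complex.mul_conj]
  norm_cast
  exact (Complex.sq_norm g).symm

lemma det_nlftFactor' (k : ℤ) (g : ℂ) {z : ℂ} (hz : z ≠ 0) :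
    (nlftFactor k g z).det = 1 := by
  have hS : (0:ℝ) < 1 + ‖g‖ ^ 2 := by positivity
  rw [nlftFactor, det_smul, det_fin_two_of]
  have hzz : z ^ k * z ^ (-k) = 1 := by
    rw [← zpow_add₀ hz]; simp
  have h2 : (1:ℂ) * 1 - g * z ^ k * (-(starRingEnd ℂ g) * z ^ (-k))
      = ((1 + ‖g‖ ^ 2 : ℝ) : ℂ) := by
    push_cast
    linear_combination (z ^ k * z ^ (-k)) * mul_conj_abs' g + ((‖g‖ : ℂ)) ^ 2 * hzz
  rw [h2]
  simp only [Fintype.card_fin]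
  rw [← Complex.ofReal_pow, ← Complex.ofReal_mul]
  rw [div_pow, one_pow, Real.sq_sqrt hS.le, one_div, inv_mul_cancel₀ hS.ne']
  simp

lemma det_nlft' (m : ℤ) {n : ℕ} (γ : Fin n → ℂ) {z : ℂ} (hz : z ≠ 0) :
    (nlft m γ z).det = 1 := by
  induction n generalizing m with
  | zero => rw [nlft_zero']; simp
  | succ n ih =>
    rw [nlft_succ', det_mul, det_nlftFactor' m (γ 0) hz, ih]
    ring

lemma sym_nlftFactor' (k : ℤ) (g : ℂ) {z : ℂ} (hz : z ≠ 0) :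
    (nlftFactor k g (((starRingEnd ℂ) z)⁻¹)).map (starRingEnd ℂ)
      = ((nlftFactor k g z).adjugate)ᵀ := by
  have hcz : (starRingEnd ℂ) z ≠ 0 := by simpa using hz
  ext i j
  fin_cases i <;> fin_cases j <;>
    simp [nlftFactor, Matrix.map_apply, Matrix.adjugate_fin_two, Matrix.smul_apply,
      map_zpow₀, _root_.inv_zpow, ← _root_.zpow_neg]

lemma sym_nlft' (m : ℤ) {n : ℕ} (γ : Fin n → ℂ) {z : ℂ} (hz : z ≠ 0) :
    (nlft m γ (((starRingEnd ℂ) z)⁻¹)).map (starRingEnd ℂ)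
      = ((nlft m γ z).adjugate)ᵀ := by
  induction n generalizing m with
  | zero => rw [nlft_zero', nlft_zero']; simp
  | succ n ih =>
    rw [nlft_succ', nlft_succ', Matrix.map_mul, Matrix.adjugate_mul_distrib,
      Matrix.transpose_mul, sym_nlftFactor' m (γ 0) hz, ih (m+1) (fun j => γ j.succ)]

open Polynomial in
lemma nlft_struct' {n : ℕ} (m : ℤ) (γ : Fin n → ℂ) :
    ∃ P Q R S : Polynomial ℂ,
      S.coeff 0 = ((∏ j, (1 / Real.sqrt (1 + ‖γ j‖ ^ 2)) : ℝ) : ℂ) ∧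
      ∀ z : ℂ, z ≠ 0 →
        nlft m γ z 0 0 = z ^ (-(n:ℤ)) * P.eval z ∧
        nlft m γ z 0 1 = z ^ m * Q.eval z ∧
        nlft m γ z 1 0 = z ^ (-(m + (n:ℤ))) * R.eval z ∧
        nlft m γ z 1 1 = S.eval z := by
  induction n generalizing m with
  | zero =>
    refine ⟨1, 0, 0, 1, by simp, fun z hz => ?_⟩
    rw [nlft_zero']
    simp [Matrix.one_apply]
  | succ n ih =>
    obtain ⟨P', Q', R', S', hS', h'⟩ := ih (m+1) (fun j => γ j.succ)
    set s : ℂ := ((1 / Real.sqrt (1 + ‖γ 0‖ ^ 2) : ℝ) : ℂ) with hs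
    set g : ℂ := γ 0 with hg
    refine ⟨C s * (X * P' + C g * R'), C s * (X * Q' + C g * S'),
      C s * (C (-(starRingEnd ℂ g)) * X * P' + R'),
      C s * (C (-(starRingEnd ℂ g)) * X * Q' + S'), ?_, fun z hz => ?_⟩
    · have hc : (C s * (C (-(starRingEnd ℂ g)) * X * Q' + S')).coeff 0 = s * S'.coeff 0 := by
        simp [coeff_zero_eq_eval_zero]
      rw [hc, hS', hs, Fin.prod_univ_succ]
      push_cast
      ring
    · obtain ⟨h00, h01, h10, h11⟩ := h' z hz
      have hF := nlft_succ' m γ z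
      have key : ∀ i j, nlft m γ z i j =
          nlftFactor m g z i 0 * nlft (m+1) (fun j => γ j.succ) z 0 j +
          nlftFactor m g z i 1 * nlft (m+1) (fun j => γ j.succ) z 1 j := by
        intro i j
        rw [hF, Matrix.mul_apply, Fin.sum_univ_two]
      have e00 : nlftFactor m g z 0 0 = s := by simp [nlftFactor, hs]
      have e01 : nlftFactor m g z 0 1 = s * (g * z ^ m) := by simp [nlftFactor, hs]
      have e10 : nlftFactor m g z 1 0 = s * (-(starRingEnd ℂ g) * z ^ (-m)) := by
        simp [nlftFactor, hs]
      have e11 : nlftFactor m g z 1 1 = s := by simp [nlftFactor, hs]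
      have hA : z ^ (-((n:ℤ)+1)) * z = z ^ (-(n:ℤ)) := by
        calc z ^ (-((n:ℤ)+1)) * z = z ^ (-((n:ℤ)+1)) * z ^ (1:ℤ) := by norm_num
        _ = z ^ (-((n:ℤ)+1)+1) := (zpow_add₀ hz _ _).symm
        _ = z ^ (-(n:ℤ)) := by ring_nf
      have hB : z ^ m * z ^ (-(m+1+(n:ℤ))) = z ^ (-((n:ℤ)+1)) := by
        rw [← zpow_add₀ hz]; ring_nf
      have hC : z ^ (m+(1:ℤ)) = z ^ m * z := by
        rw [zpow_add₀ hz]; norm_num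
      have hD : z ^ (-m) * z ^ (-(n:ℤ)) = z ^ (-(m + ((n:ℤ)+1))) * z := by
        rw [← zpow_add₀ hz]
        calc z ^ (-m + -(n:ℤ)) = z ^ (-(m + ((n:ℤ)+1)) + 1) := by ring_nf
        _ = z ^ (-(m + ((n:ℤ)+1))) * z ^ (1:ℤ) := zpow_add₀ hz _ _
        _ = z ^ (-(m + ((n:ℤ)+1))) * z := by norm_num
      have hE : z ^ (-(m+1+(n:ℤ))) = z ^ (-(m + ((n:ℤ)+1))) := by ring_nf
      have hF2 : z ^ (-m) * z ^ (m+(1:ℤ)) = z := by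
        rw [← zpow_add₀ hz]
        calc z ^ (-m + (m+1)) = z ^ (1:ℤ) := by ring_nf
        _ = z := by norm_num
      refine ⟨?_, ?_, ?_, ?_⟩
      · rw [key, e00, e01, h00, h10]
        simp only [eval_mul, eval_add, eval_C, eval_X]
        push_cast
        linear_combination (-(s * eval z P')) * hA + (s * g * eval z R') * hB
      · rw [key, e00, e01, h01, h11]
        simp only [eval_mul, eval_add, eval_C, eval_X]
        push_cast
        linear_combination (s * eval z Q') * hC
      · rw [key, e10, e11, h00, h10]
        simp only [eval_mul, eval_add, eval_C, eval_X]
        push_cast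
        linear_combination (-(s * starRingEnd ℂ g * eval z P')) * hD + (s * eval z R') * hE
      · rw [key, e10, e11, h01, h11]
        simp only [eval_mul, eval_add, eval_C, eval_X]
        push_cast
        linear_combination (-(s * starRingEnd ℂ g * eval z Q')) * hF2

theorem nlft_determinant_condition (m : ℤ) (n : ℕ) (γ : Fin n → ℂ) :
    (∀ z : ℂ, z ≠ 0 →
      (nlft m γ z 0 0) * (starRingEnd ℂ) (nlft m γ (((starRingEnd ℂ) z)⁻¹) 0 0) +
        (nlft m γ z 0 1) * (starRingEnd ℂ) (nlft m γ (((starRingEnd ℂ) z)⁻¹) 0 1) = 1) ∧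
    ∃ c : ℝ, 0 < c ∧
      Filter.Tendsto
        (fun z : ℂ => (starRingEnd ℂ) (nlft m γ (((starRingEnd ℂ) z)⁻¹) 0 0))
        (nhdsWithin 0 {(0 : ℂ)}ᶜ) (nhds (c : ℂ)) := by
  obtain ⟨P, Q, R, S, hS, hPQRS⟩ := nlft_struct' m γ
  have hsym : ∀ z : ℂ, z ≠ 0 →
      (starRingEnd ℂ) (nlft m γ (((starRingEnd ℂ) z)⁻¹) 0 0) = nlft m γ z 1 1 ∧
      (starRingEnd ℂ) (nlft m γ (((starRingEnd ℂ) z)⁻¹) 0 1) = -(nlft m γ z 1 0) := by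
    intro z hz
    have h := sym_nlft' m γ hz
    constructor
    · have := congrFun (congrFun h 0) 0
      simpa [Matrix.map_apply, Matrix.adjugate_fin_two] using this
    · have := congrFun (congrFun h 0) 1
      simpa [Matrix.map_apply, Matrix.adjugate_fin_two] using this
  constructor
  · intro z hz
    rw [(hsym z hz).1, (hsym z hz).2]
    have hdet := det_nlft' m γ hz
    rw [Matrix.det_fin_two] at hdet
    linear_combination hdet
  · refine ⟨∏ j, (1 / Real.sqrt (1 + ‖γ j‖ ^ 2)), ?_, ?_⟩
    · exact Finset.prod_pos fun j _ => by positivity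
    · have hev : (fun z : ℂ => Polynomial.eval z S) =ᶠ[nhdsWithin 0 {(0 : ℂ)}ᶜ]
          (fun z : ℂ => (starRingEnd ℂ) (nlft m γ (((starRingEnd ℂ) z)⁻¹) 0 0)) := by
        filter_upwards [self_mem_nhdsWithin] with z hz
        have hz' : z ≠ 0 := hz
        rw [(hsym z hz').1, (hPQRS z hz').2.2.2]
      refine Filter.Tendsto.congr' hev ?_
      have : Filter.Tendsto (fun z : ℂ => Polynomial.eval z S) (nhds 0)
          (nhds (Polynomial.eval 0 S)) := (Polynomial.continuous S).continuousAt
      rw [← Polynomial.coeff_zero_eq_eval_zero, hS] at this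
      exact this.mono_left nhdsWithin_le_nhds
end

section
/- (Injectivity of NLFT on compactly supported sequences) If two compactly supported sequences γ, γ': ℤ → ℂ have equal nonlinear Fourier transforms, i.e., the Laurent-polynomial pairs (a,b) and (a',b') coincide as functions on the unit circle, then γ = γ'. -/
open Matrix Complex

/-- The nonlinear Fourier transform of a compactly supported sequence `γ : ℤ →₀ ℂ`,
defined as the product of the factors over the support of `γ`, taken in
increasing order of the index. -/
noncomputable def nlftFinsupp (γ : ℤ →₀ ℂ) (z : ℂ) : Matrix (Fin 2) (Fin 2) ℂ :=
  ((γ.support.sort (· ≤ ·)).map (fun k => nlftFactor k (γ k) z)).prod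

section NLFTAux

open LaurentPolynomial AddMonoidAlgebra

/-! ### Auxiliary definitions: the NLFT with Laurent-polynomial entries -/

noncomputable def cc (g : ℂ) : ℝ := 1 / Real.sqrt (1 + ‖g‖ ^ 2)

lemma cc_pos (g : ℂ) : 0 < cc g := by
  have h : (0:ℝ) < Real.sqrt (1 + ‖g‖ ^ 2) := Real.sqrt_pos.2 (by positivity)
  exact div_pos one_pos h

lemma cc_sq (g : ℂ) : (cc g : ℝ)^2 * (1 + ‖g‖ ^ 2) = 1 := by
  have h : (0:ℝ) < 1 + ‖g‖ ^ 2 := by positivity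
  rw [cc, div_pow, one_pow, Real.sq_sqrt h.le]
  field_simp

lemma cc_one (g : ℂ) :
    (cc g : ℂ) * (cc g : ℂ) + (cc g : ℂ) * g * ((cc g : ℂ) * (starRingEnd ℂ g)) = 1 := by
  have hgg : g * (starRingEnd ℂ) g = ((‖g‖ ^ 2 : ℝ) : ℂ) := by
    rw [Complex.mul_conj]; norm_cast; exact (Complex.sq_norm g).symm
  push_cast at hgg
  have h2 := congrArg (fun r : ℝ => (r : ℂ)) (cc_sq g)
  push_cast at h2
  linear_combination h2 + ((cc g : ℂ))^2 * hgg

noncomputable def FL (k : ℤ) (g : ℂ) : Matrix (Fin 2) (Fin 2) (LaurentPolynomial ℂ) :=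
  !![AddMonoidAlgebra.single 0 ((cc g : ℂ)), AddMonoidAlgebra.single k ((cc g : ℂ) * g);
     AddMonoidAlgebra.single (-k) (-((cc g : ℂ) * (starRingEnd ℂ g))),
     AddMonoidAlgebra.single 0 ((cc g : ℂ))]

lemma FL_det (k : ℤ) (g : ℂ) : (FL k g).det = 1 := by
  rw [FL, Matrix.det_fin_two_of]
  rw [AddMonoidAlgebra.single_mul_single, AddMonoidAlgebra.single_mul_single]
  simp only [add_zero, add_neg_cancel]
  rw [← AddMonoidAlgebra.single_sub,
    show (cc g : ℂ) * (cc g : ℂ) - (cc g : ℂ) * g * -((cc g : ℂ) * (starRingEnd ℂ g)) = 1 from by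
      linear_combination cc_one g]
  exact (AddMonoidAlgebra.one_def).symm

noncomputable def prodL (l : List ℤ) (g : ℤ → ℂ) : Matrix (Fin 2) (Fin 2) (LaurentPolynomial ℂ) :=
  (l.map fun k => FL k (g k)).prod

noncomputable def Rtot (l : List ℤ) (g : ℤ → ℂ) : ℝ := (l.map fun k => cc (g k)).prod

lemma Rtot_pos (l : List ℤ) (g : ℤ → ℂ) : 0 < Rtot l g := by
  apply List.prod_pos
  intro x hx
  simp only [List.mem_map] at hx
  obtain ⟨k, -, rfl⟩ := hx
  exact cc_pos _

/-! ### Coefficient computations -/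

lemma coeff_mul_single (f : LaurentPolynomial ℂ) (m : ℤ) (a : ℂ) (d : ℤ) :
    (f * (AddMonoidAlgebra.single m a : LaurentPolynomial ℂ)).coeff d = f.coeff (d - m) * a := by
  simp only [AddMonoidAlgebra.coeff_mul_single_apply, sub_eq_add_neg]

lemma prodL_append (l : List ℤ) (k : ℤ) (g : ℤ → ℂ) :
    prodL (l ++ [k]) g = prodL l g * FL k (g k) := by
  simp [prodL, List.map_append]

lemma key00 (l : List ℤ) (k : ℤ) (g : ℤ → ℂ) (d : ℤ) :
    (prodL (l ++ [k]) g 0 0).coeff d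
      = (prodL l g 0 0).coeff d * (cc (g k) : ℂ)
        + (prodL l g 0 1).coeff (d + k) * (-((cc (g k) : ℂ) * (starRingEnd ℂ (g k)))) := by
  rw [prodL_append, Matrix.mul_apply, Fin.sum_univ_two]
  show ((prodL l g 0 0 * AddMonoidAlgebra.single 0 ((cc (g k) : ℂ))
    + prodL l g 0 1 * AddMonoidAlgebra.single (-k) (-((cc (g k) : ℂ) * (starRingEnd ℂ (g k))))
    : LaurentPolynomial ℂ)).coeff d = _
  rw [AddMonoidAlgebra.coeff_add, Finsupp.add_apply, coeff_mul_single, coeff_mul_single, sub_zero, sub_neg_eq_add]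

lemma key01 (l : List ℤ) (k : ℤ) (g : ℤ → ℂ) (d : ℤ) :
    (prodL (l ++ [k]) g 0 1).coeff d
      = (prodL l g 0 0).coeff (d - k) * ((cc (g k) : ℂ) * g k)
        + (prodL l g 0 1).coeff d * (cc (g k) : ℂ) := by
  rw [prodL_append, Matrix.mul_apply, Fin.sum_univ_two]
  show ((prodL l g 0 0 * AddMonoidAlgebra.single k ((cc (g k) : ℂ) * g k)
    + prodL l g 0 1 * AddMonoidAlgebra.single 0 ((cc (g k) : ℂ)) : LaurentPolynomial ℂ)).coeff d = _
  rw [AddMonoidAlgebra.coeff_add, Finsupp.add_apply, coeff_mul_single, coeff_mul_single, sub_zero]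

lemma rowzero (g : ℤ → ℂ) (l : List ℤ) (hl : l.Pairwise (· < ·)) :
    (∀ d : ℤ, 0 < d → (prodL l g 0 0).coeff d = 0) ∧
      (prodL l g 0 0).coeff 0 = ((Rtot l g : ℝ) : ℂ) ∧
      ∀ N : ℤ, (∀ x ∈ l, x < N) → ∀ d : ℤ, N ≤ d → (prodL l g 0 1).coeff d = 0 := by
  induction l using List.reverseRecOn with
  | nil =>
      have hp : prodL [] g = 1 := by simp [prodL]
      refine ⟨fun d hd => ?_, ?_, fun N _ d _ => ?_⟩
      · rw [hp, Matrix.one_apply_eq, AddMonoidAlgebra.one_def, AddMonoidAlgebra.coeff_single, Finsupp.single_apply,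
          if_neg (by omega)]
      · rw [hp, Matrix.one_apply_eq, AddMonoidAlgebra.one_def, AddMonoidAlgebra.coeff_single, Finsupp.single_apply,
          if_pos rfl]
        simp [Rtot]
      · rw [hp, Matrix.one_apply_ne (by decide)]
        rfl
  | append_singleton l k ih =>
      obtain ⟨hls, -, hlk⟩ := List.pairwise_append.mp hl
      have hlk' : ∀ x ∈ l, x < k := fun x hx => hlk x hx k (List.mem_singleton_self k)
      obtain ⟨h1, h2, h3⟩ := ih hls
      refine ⟨fun d hd => ?_, ?_, fun N hN d hNd => ?_⟩
      · rw [key00, h1 d hd, h3 k hlk' (d + k) (by omega)]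
        ring
      · rw [key00, h2, h3 k hlk' (0 + k) (by omega)]
        have : Rtot (l ++ [k]) g = Rtot l g * cc (g k) := by
          simp [Rtot, List.map_append]
        rw [this]
        push_cast
        ring
      · have hkN : k < N := hN k (by simp)
        rw [key01, h1 (d - k) (by omega), h3 N (fun x hx => hN x (by simp [hx])) d hNd]
        ring

lemma coeff_b_top (g : ℤ → ℂ) (l : List ℤ) (k : ℤ) (hl : (l ++ [k]).Pairwise (· < ·)) :
    (prodL (l ++ [k]) g 0 1).coeff k = g k * ((Rtot (l ++ [k]) g : ℝ) : ℂ) := by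
  obtain ⟨hls, -, hlk⟩ := List.pairwise_append.mp hl
  have hlk' : ∀ x ∈ l, x < k := fun x hx => hlk x hx k (List.mem_singleton_self k)
  obtain ⟨h1, h2, h3⟩ := rowzero g l hls
  rw [key01, sub_self, h2, h3 k hlk' k le_rfl]
  have : Rtot (l ++ [k]) g = Rtot l g * cc (g k) := by simp [Rtot, List.map_append]
  rw [this]
  push_cast
  ring

/-! ### Evaluation on the unit circle -/

noncomputable def zhom (z : ℂ) (hz : z ≠ 0) : Multiplicative ℤ →* ℂ where
  toFun n := z ^ (Multiplicative.toAdd n)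
  map_one' := by simp
  map_mul' m n := zpow_add₀ hz _ _

noncomputable def ev (z : ℂ) (hz : z ≠ 0) : LaurentPolynomial ℂ →ₐ[ℂ] ℂ :=
  AddMonoidAlgebra.lift ℂ ℂ ℤ (zhom z hz)

lemma ev_single (z : ℂ) (hz : z ≠ 0) (m : ℤ) (a : ℂ) :
    ev z hz (AddMonoidAlgebra.single m a) = a * z ^ m := by
  rw [ev, AddMonoidAlgebra.lift_single]; simp [zhom]

lemma ev_C (z : ℂ) (hz : z ≠ 0) (a : ℂ) : ev z hz (C a) = a := by
  have h : (C a : LaurentPolynomial ℂ) = AddMonoidAlgebra.single 0 a := rfl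
  rw [h, ev_single, zpow_zero, mul_one]

lemma ev_T (z : ℂ) (hz : z ≠ 0) (m : ℤ) : ev z hz (T m) = z ^ m := by
  rw [show (T m : LaurentPolynomial ℂ) = AddMonoidAlgebra.single m 1 from rfl, ev_single, one_mul]

lemma map_FL (z : ℂ) (hz : z ≠ 0) (k : ℤ) (g : ℂ) :
    (FL k g).map (ev z hz) = nlftFactor k g z := by
  ext i j
  fin_cases i <;> fin_cases j <;>
    · simp [FL, nlftFactor, -Finsupp.single_mul, _root_.map_mul, ev_C, ev_T, ev_single,
        _root_.zpow_neg]
      push_cast [cc]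
      ring

lemma map_prodL (z : ℂ) (hz : z ≠ 0) (l : List ℤ) (g : ℤ → ℂ) :
    (prodL l g).map (ev z hz) = (l.map fun k => nlftFactor k (g k) z).prod := by
  induction l with
  | nil =>
      show (1 : Matrix (Fin 2) (Fin 2) (LaurentPolynomial ℂ)).map (ev z hz) = 1
      exact Matrix.map_one _ (map_zero _) (map_one _)
  | cons a t ih =>
      have h1 : prodL (a :: t) g = FL a (g a) * prodL t g := by simp [prodL]
      have h2 : ((a :: t).map fun k => nlftFactor k (g k) z).prod
          = nlftFactor a (g a) z * (t.map fun k => nlftFactor k (g k) z).prod := by simp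
      rw [h1, h2, ← ih, ← map_FL z hz a (g a)]
      simpa using Matrix.map_mul (L := FL a (g a)) (M := prodL t g) (f := (ev z hz).toRingHom)

lemma ev_toLaurent (z : ℂ) (hz : z ≠ 0) (p : Polynomial ℂ) :
    ev z hz (Polynomial.toLaurent p) = p.eval z := by
  have : (ev z hz).comp Polynomial.toLaurentAlg = Polynomial.aeval z := by
    apply Polynomial.algHom_ext
    simp [Polynomial.toLaurentAlg_apply, Polynomial.toLaurent_X, ev_T]
  have := congrArg (fun ψ => ψ p) this
  simpa [Polynomial.toLaurentAlg_apply] using this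

/-! ### The unit circle is infinite enough -/

noncomputable def qq (t : ℝ) : ℂ := (1 + t * I) / (1 - t * I)

lemma qden_ne (t : ℝ) : (1 - (t:ℂ) * I) ≠ 0 := by
  intro h
  have := congrArg Complex.re h
  simp at this

lemma qnum_ne (t : ℝ) : (1 + (t:ℂ) * I) ≠ 0 := by
  intro h
  have := congrArg Complex.re h
  simp at this

lemma qq_abs (t : ℝ) : ‖qq t‖ = 1 := by
  have hc : (starRingEnd ℂ) (1 + (t:ℂ) * I) = 1 - (t:ℂ) * I := by
    simp [sub_eq_add_neg]
  have habs : ‖1 - (t:ℂ) * I‖ = ‖1 + (t:ℂ) * I‖ := by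
    rw [← hc, Complex.norm_conj]
  rw [qq, norm_div, habs]
  exact div_self (norm_ne_zero_iff.mpr (qnum_ne t))

lemma qq_inj : Function.Injective qq := by
  intro t s h
  rw [qq, qq, div_eq_div_iff (qden_ne t) (qden_ne s)] at h
  have h2 := congrArg Complex.im h
  simp [Complex.add_im, Complex.mul_im] at h2
  linarith

lemma laurent_eq_of_eval_circle (f f' : LaurentPolynomial ℂ)
    (h : ∀ z : ℂ, ∀ hz : z ≠ 0, ‖z‖ = 1 → ev z hz f = ev z hz f') : f = f' := by
  rw [← sub_eq_zero]
  set d := f - f' with hd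
  obtain ⟨n, p, hp⟩ := d.exists_T_pow
  have hp0 : p = 0 := by
    apply Polynomial.eq_zero_of_infinite_isRoot
    apply Set.infinite_of_injective_forall_mem qq_inj
    intro t
    have hz1 : ‖qq t‖ = 1 := qq_abs t
    have hz : qq t ≠ 0 := fun h0 => by rw [h0] at hz1; simp at hz1
    show p.IsRoot (qq t)
    have hd0 : ev (qq t) hz d = 0 := by
      rw [hd, map_sub, h (qq t) hz hz1, sub_self]
    have h3 : ev (qq t) hz (Polynomial.toLaurent p) = 0 := by
      rw [hp, _root_.map_mul, hd0, zero_mul]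
    rwa [ev_toLaurent] at h3
  have hdT : d * T n = 0 := by rw [← hp, hp0]; simp
  have h4 := congrArg (fun x => x * T (-(n : ℤ))) hdT
  simpa [LaurentPolynomial.mul_T_assoc] using h4

/-! ### Dropping identity factors and sorting -/

lemma cc_zero : cc 0 = 1 := by simp [cc]

lemma single_zero_one : (AddMonoidAlgebra.single 0 1 : LaurentPolynomial ℂ) = 1 := rfl

lemma FL_zero (k : ℤ) : FL k 0 = 1 := by
  ext i j
  fin_cases i <;> fin_cases j <;>
    simp [FL, cc_zero, single_zero_one, Matrix.one_apply, -Finsupp.single_mul]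

lemma prodL_filter (γ : ℤ →₀ ℂ) (l : List ℤ) :
    prodL l γ = prodL (l.filter (fun k => k ∈ γ.support)) γ := by
  induction l with
  | nil => rfl
  | cons a l ih =>
      have hc : prodL (a :: l) γ = FL a (γ a) * prodL l γ := by simp [prodL]
      by_cases ha : a ∈ γ.support
      · rw [List.filter_cons_of_pos (by simpa using ha)]
        have : prodL (a :: l.filter (fun k => k ∈ γ.support)) γ
            = FL a (γ a) * prodL (l.filter (fun k => k ∈ γ.support)) γ := by simp [prodL]
        rw [this, ← ih, ← hc]
      · rw [List.filter_cons_of_neg (by simpa using ha)]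
        have h0 : γ a = 0 := Finsupp.notMem_support_iff.mp ha
        rw [hc, h0, FL_zero, one_mul, ih]

lemma list_eq_of_perm_of_sorted {l₁ l₂ : List ℤ} (hp : l₁.Perm l₂)
    (h1 : l₁.Pairwise (· ≤ ·)) (h2 : l₂.Pairwise (· ≤ ·)) : l₁ = l₂ :=
  List.Perm.eq_of_pairwise' h1 h2 hp

lemma filter_sort_eq (γ : ℤ →₀ ℂ) (S : Finset ℤ) (hsub : γ.support ⊆ S) :
    (S.sort (· ≤ ·)).filter (fun k => k ∈ γ.support) = γ.support.sort (· ≤ ·) := by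
  apply list_eq_of_perm_of_sorted
  · apply (List.perm_ext_iff_of_nodup ((S.sort_nodup _).filter _) (γ.support.sort_nodup _)).mpr
    intro a
    simp only [List.mem_filter, Finset.mem_sort, decide_eq_true_eq]
    constructor
    · rintro ⟨-, h2⟩; exact h2
    · intro h; exact ⟨hsub h, h⟩
  · exact List.Pairwise.filter _ (S.pairwise_sort _)
  · exact γ.support.pairwise_sort _

lemma sort_erase_max (S : Finset ℤ) (hS : S.Nonempty) :
    S.sort (· ≤ ·) = (S.erase (S.max' hS)).sort (· ≤ ·) ++ [S.max' hS] := by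
  set n := S.max' hS with hn
  apply list_eq_of_perm_of_sorted
  · apply (List.perm_ext_iff_of_nodup (S.sort_nodup _) ?_).mpr
    · intro a
      simp only [Finset.mem_sort, List.mem_append, List.mem_singleton, Finset.mem_erase]
      constructor
      · intro h
        by_cases ha : a = n
        · exact Or.inr ha
        · exact Or.inl ⟨ha, h⟩
      · rintro (⟨-, h⟩ | rfl)
        · exact h
        · exact S.max'_mem hS
    · rw [List.nodup_append]
      refine ⟨(S.erase n).sort_nodup _, List.nodup_singleton _, ?_⟩
      simp only [List.mem_singleton]
      simp
      exact fun a h _ => h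
  · exact S.pairwise_sort _
  · refine List.pairwise_append.mpr ⟨(S.erase n).pairwise_sort _, List.pairwise_singleton _ _, ?_⟩
    intro a ha b hb
    rw [List.mem_singleton] at hb
    subst hb
    exact S.le_max' a (Finset.mem_of_mem_erase (by simpa using ha))

/-! ### The main induction -/

lemma main_induction (S : Finset ℤ) : ∀ g g' : ℤ → ℂ,
    prodL (S.sort (· ≤ ·)) g = prodL (S.sort (· ≤ ·)) g' → ∀ k ∈ S, g k = g' k := by
  induction S using Finset.strongInduction with
  | _ S ih =>
    intro g g' hP k hk
    have hS : S.Nonempty := ⟨k, hk⟩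
    set n := S.max' hS with hn
    have hsort := sort_erase_max S hS
    set l := (S.erase n).sort (· ≤ ·) with hl
    rw [hsort] at hP
    have hlt : (l ++ [n]).Pairwise (· < ·) := by
      rw [← hsort]
      exact (Finset.sortedLT_sort S).pairwise
    have e1' : Rtot (l ++ [n]) g = Rtot (l ++ [n]) g' := by
      have e1 : ((Rtot (l ++ [n]) g : ℝ) : ℂ) = ((Rtot (l ++ [n]) g' : ℝ) : ℂ) := by
        rw [← (rowzero g _ hlt).2.1, ← (rowzero g' _ hlt).2.1, hP]
      exact_mod_cast e1
    have hgn : g n = g' n := by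
      have e2 : g n * ((Rtot (l ++ [n]) g : ℝ) : ℂ)
          = g' n * ((Rtot (l ++ [n]) g' : ℝ) : ℂ) := by
        rw [← coeff_b_top g l n hlt, ← coeff_b_top g' l n hlt, hP]
      rw [e1'] at e2
      have hpos : ((Rtot (l ++ [n]) g' : ℝ) : ℂ) ≠ 0 := by
        exact_mod_cast (Rtot_pos _ _).ne'
      exact mul_right_cancel₀ hpos e2
    rcases eq_or_ne k n with rfl | hkn
    · exact hgn
    · have hProdl : prodL l g = prodL l g' := by
        have h2 : prodL l g * FL n (g' n) = prodL l g' * FL n (g' n) := by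
          calc prodL l g * FL n (g' n) = prodL l g * FL n (g n) := by rw [hgn]
            _ = prodL (l ++ [n]) g := (prodL_append l n g).symm
            _ = prodL (l ++ [n]) g' := hP
            _ = prodL l g' * FL n (g' n) := prodL_append l n g'
        haveI : Invertible (FL n (g' n)).det := by
          rw [FL_det]
          exact invertibleOne
        haveI hinv : Invertible (FL n (g' n)) := Matrix.invertibleOfDetInvertible _
        calc prodL l g = prodL l g * FL n (g' n) * ⅟(FL n (g' n)) :=
              (mul_invOf_cancel_right _ _).symm
          _ = prodL l g' * FL n (g' n) * ⅟(FL n (g' n)) := by rw [h2]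
          _ = prodL l g' := mul_invOf_cancel_right _ _
      exact ih (S.erase n) (Finset.erase_ssubset (S.max'_mem hS)) g g' hProdl k
        (Finset.mem_erase.mpr ⟨hkn, hk⟩)

end NLFTAux

theorem nlft_injective (γ γ' : ℤ →₀ ℂ)
    (h : ∀ z : ℂ, ‖z‖ = 1 → nlftFinsupp γ z = nlftFinsupp γ' z) :
    γ = γ' := by
  classical
  set S := γ.support ∪ γ'.support with hSdef
  have hγmap : ∀ (z : ℂ) (hz : z ≠ 0),
      (prodL (γ.support.sort (· ≤ ·)) γ).map (ev z hz) = nlftFinsupp γ z := by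
    intro z hz
    rw [map_prodL]
    rfl
  have hγ'map : ∀ (z : ℂ) (hz : z ≠ 0),
      (prodL (γ'.support.sort (· ≤ ·)) γ').map (ev z hz) = nlftFinsupp γ' z := by
    intro z hz
    rw [map_prodL]
    rfl
  have key : prodL (S.sort (· ≤ ·)) ⇑γ = prodL (S.sort (· ≤ ·)) ⇑γ' := by
    rw [prodL_filter γ (S.sort (· ≤ ·)), filter_sort_eq γ S Finset.subset_union_left,
        prodL_filter γ' (S.sort (· ≤ ·)), filter_sort_eq γ' S Finset.subset_union_right]
    apply Matrix.ext
    intro i j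
    apply laurent_eq_of_eval_circle
    intro z hz hz1
    have hmm : (prodL (γ.support.sort (· ≤ ·)) ⇑γ).map (ev z hz)
        = (prodL (γ'.support.sort (· ≤ ·)) ⇑γ').map (ev z hz) := by
      rw [hγmap z hz, hγ'map z hz]
      exact h z hz1
    have h6 := congrFun (congrFun hmm i) j
    simpa [Matrix.map_apply] using h6
  have hall := main_induction S ⇑γ ⇑γ' key
  ext a
  by_cases ha : a ∈ S
  · exact hall a ha
  · rw [hSdef, Finset.mem_union] at ha
    push_neg at ha
    rw [Finsupp.notMem_support_iff.mp ha.1, Finsupp.notMem_support_iff.mp ha.2]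
end

section
/- (Linear approximation of NLFT) For a compactly supported sequence γ supported in [m,n] with NLFT (a,b), the upper-right entry satisfies |b(z) - Σ_{k=m}^n γ_k z^k| ≤ C·δ² for all z on the unit circle, where δ = Σ_k |γ_k| is the ℓ¹ norm, provided δ ≤ 1, with C an absolute constant (e.g. C = e). -/
open Matrix Complex

lemma nlft_succ_aux (m : ℤ) (n : ℕ) (γ : Fin (n+1) → ℂ) (z : ℂ) :
    nlft m γ z = nlft m (γ ∘ Fin.castSucc) z * nlftFactor (m + n) (γ (Fin.last n)) z := by
  unfold nlft
  rw [List.ofFn_succ']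
  simp [List.concat_eq_append]

lemma c_facts_aux (t : ℝ) (ht : 0 ≤ t) :
    1 - 1 / Real.sqrt (1 + t) ≤ t / 2 ∧ 1 / Real.sqrt (1 + t) ≤ 1
      ∧ 0 ≤ 1 / Real.sqrt (1 + t) := by
  have hs0 := Real.sqrt_nonneg (1 + t)
  have hs : Real.sqrt (1 + t) ^ 2 = 1 + t := Real.sq_sqrt (by linarith)
  have h1 : (1:ℝ) ≤ Real.sqrt (1 + t) := by nlinarith
  have h2 : Real.sqrt (1 + t) ≤ 1 + t / 2 := by nlinarith
  refine ⟨?_, ?_, by positivity⟩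
  · have heq : 1 - 1 / Real.sqrt (1+t) = (Real.sqrt (1+t) - 1) / Real.sqrt (1+t) := by
      field_simp
    rw [heq]
    calc (Real.sqrt (1+t) - 1) / Real.sqrt (1+t) ≤ (Real.sqrt (1+t) - 1) / 1 := by
          apply div_le_div_of_nonneg_left <;> linarith
      _ ≤ t / 2 := by linarith
  · rw [div_le_one (by linarith)]; linarith

lemma abs3_aux (x y w : ℂ) :
    ‖x + y + w‖ ≤ ‖x‖ + ‖y‖ + ‖w‖ := by
  calc ‖x + y + w‖ ≤ ‖x + y‖ + ‖w‖ :=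
        norm_add_le _ _
    _ ≤ ‖x‖ + ‖y‖ + ‖w‖ := by
        linarith [norm_add_le x y]

lemma arith1_aux (δ G c x y : ℝ) (hδ0 : 0 ≤ δ) (hG0 : 0 ≤ G) (hx0 : 0 ≤ x) (hy0 : 0 ≤ y)
    (hc0 : 0 ≤ c) (hc1 : c ≤ 1) (hc2 : 1 - c ≤ G ^ 2 / 2)
    (hx : x ≤ δ ^ 2) (hy : y ≤ 2 * δ) :
    c * x + (1 - c) + c * (G * y) ≤ (δ + G) ^ 2 := by
  have e1 : c * x ≤ x := by nlinarith
  have e2 : c * (G * y) ≤ G * y := by nlinarith [mul_nonneg hG0 hy0]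
  have e3 : G * y ≤ G * (2 * δ) := by nlinarith
  nlinarith

lemma arith2_aux (δ G c xa y : ℝ) (hδ0 : 0 ≤ δ) (hG0 : 0 ≤ G) (hxa0 : 0 ≤ xa) (hy0 : 0 ≤ y)
    (hc0 : 0 ≤ c) (hc1 : c ≤ 1) (hδG : δ + G ≤ 1)
    (hxa : xa ≤ 1 + δ ^ 2) (hy : y ≤ 2 * δ) :
    xa * (c * (G * 1)) + y * c ≤ 2 * (δ + G) := by
  have e1 : xa * (c * (G * 1)) ≤ xa * G := by nlinarith [mul_nonneg hxa0 hG0]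
  have e2 : xa * G ≤ (1 + δ ^ 2) * G := by nlinarith
  have e3 : y * c ≤ y := by nlinarith
  have e4 : δ ^ 2 ≤ 1 := by nlinarith
  nlinarith
  
lemma arith3_aux (δ G c u y w : ℝ) (hδ0 : 0 ≤ δ) (hG0 : 0 ≤ G) (hu0 : 0 ≤ u) (hy0 : 0 ≤ y)
    (hc1 : c ≤ 1) (hc2 : 1 - c ≤ G ^ 2 / 2) (hδG : δ + G ≤ 1)
    (hu : u ≤ δ ^ 2 + G ^ 2 / 2) (hy : y ≤ 2 * δ) (hw : w ≤ δ ^ 2) :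
    u * G + (1 - c) * y + w ≤ (δ + G) ^ 2 := by
  have e1 : u * G ≤ (δ ^ 2 + G ^ 2 / 2) * G := by nlinarith
  have e2 : (1 - c) * y ≤ (G ^ 2 / 2) * (2 * δ) := by nlinarith
  have hδ1 : δ ≤ 1 := by linarith
  have hG1 : G ≤ 1 := by linarith
  nlinarith [mul_nonneg hδ0 hG0, mul_nonneg (mul_nonneg hG0 hG0) hG0,
    mul_nonneg (mul_nonneg hδ0 hδ0) hG0, mul_nonneg (mul_nonneg hG0 hG0) hδ0,
    mul_le_mul_of_nonneg_right (mul_le_one₀ hδ1 hδ0 hδ1) hG0,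
    mul_le_mul_of_nonneg_left hG1 (mul_nonneg hG0 hG0),
    mul_le_mul_of_nonneg_right hδ1 (mul_nonneg hG0 hG0)]

lemma entry00_aux (A : Matrix (Fin 2) (Fin 2) ℂ) (k : ℤ) (g z : ℂ) :
    (A * nlftFactor k g z) 0 0 =
      A 0 0 * (((1 / Real.sqrt (1 + ‖g‖ ^ 2) : ℝ) : ℂ)) +
      A 0 1 * (((1 / Real.sqrt (1 + ‖g‖ ^ 2) : ℝ) : ℂ) *
        (-(starRingEnd ℂ g) * z ^ (-k))) := by
  simp [nlftFactor, Matrix.mul_apply, Fin.sum_univ_succ]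

lemma entry01_aux (A : Matrix (Fin 2) (Fin 2) ℂ) (k : ℤ) (g z : ℂ) :
    (A * nlftFactor k g z) 0 1 =
      A 0 0 * (((1 / Real.sqrt (1 + ‖g‖ ^ 2) : ℝ) : ℂ) * (g * z ^ k)) +
      A 0 1 * (((1 / Real.sqrt (1 + ‖g‖ ^ 2) : ℝ) : ℂ)) := by
  simp [nlftFactor, Matrix.mul_apply, Fin.sum_univ_succ]

lemma nlft_key (m : ℤ) (z : ℂ) (hz : ‖z‖ = 1) (n : ℕ) :
    ∀ γ : Fin n → ℂ, (∑ k : Fin n, ‖γ k‖) ≤ 1 →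
      ‖nlft m γ z 0 0 - 1‖ ≤ (∑ k : Fin n, ‖γ k‖) ^ 2 ∧
      ‖nlft m γ z 0 1‖ ≤ 2 * (∑ k : Fin n, ‖γ k‖) ∧
      ‖nlft m γ z 0 1 - ∑ k : Fin n, γ k * z ^ (m + (k : ℕ))‖ ≤
        (∑ k : Fin n, ‖γ k‖) ^ 2 := by
  induction n with
  | zero =>
      intro γ _
      simp [nlft, Matrix.one_apply]
  | succ n ih =>
      intro γ hδ
      set γ' : Fin n → ℂ := γ ∘ Fin.castSucc with hγ'
      set g : ℂ := γ (Fin.last n) with hg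
      set δ : ℝ := ∑ k : Fin n, ‖γ' k‖ with hδdef
      set G : ℝ := ‖g‖ with hGdef
      have hsum : (∑ k : Fin (n+1), ‖γ k‖) = δ + G := by
        rw [Fin.sum_univ_castSucc]; rfl
      have hδ0 : 0 ≤ δ := Finset.sum_nonneg fun k _ => norm_nonneg _
      have hG0 : 0 ≤ G := norm_nonneg _
      have hδG1 : δ + G ≤ 1 := by rw [← hsum]; exact hδ
      obtain ⟨ha, hb, he⟩ := ih γ' (by linarith)
      set c : ℝ := 1 / Real.sqrt (1 + G ^ 2) with hcdef
      obtain ⟨hc1, hc2, hc3⟩ := c_facts_aux (G ^ 2) (by positivity)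
      rw [← hcdef] at hc1 hc2 hc3
      set a : ℂ := nlft m γ' z 0 0 with hadef
      set b : ℂ := nlft m γ' z 0 1 with hbdef
      set K : ℤ := m + n with hKdef
      have hzK : ‖z ^ K‖ = 1 := by
        rw [norm_zpow, hz, _root_.one_zpow]
      have hzK' : ‖z ^ (-K)‖ = 1 := by
        rw [norm_zpow, hz, _root_.one_zpow]
      have habs_c : ‖(c:ℂ)‖ = c := by
        rw [Complex.norm_real, Real.norm_eq_abs, _root_.abs_of_nonneg hc3]
      have habs_cm1 : ‖(c:ℂ) - 1‖ = 1 - c := by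
        have h : ((c:ℂ) - 1) = (((c - 1 : ℝ)) : ℂ) := by push_cast; ring
        rw [h, Complex.norm_real, Real.norm_eq_abs, _root_.abs_of_nonpos (by linarith)]
        ring
      have hrec := nlft_succ_aux m n γ z
      rw [← hγ', ← hg] at hrec
      have hA : nlft m γ z 0 0 =
          a * (c:ℂ) + b * ((c:ℂ) * (-(starRingEnd ℂ g) * z ^ (-K))) := by
        rw [hrec, entry00_aux, hadef, hbdef, hKdef, hcdef, hGdef]
      have hB : nlft m γ z 0 1 =
          a * ((c:ℂ) * (g * z ^ K)) + b * (c:ℂ) := by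
        rw [hrec, entry01_aux, hadef, hbdef, hKdef, hcdef, hGdef]
      have habs_b0 : 0 ≤ ‖b‖ := norm_nonneg _
      have habs_a10 : 0 ≤ ‖a - 1‖ := norm_nonneg _
      have haabs : ‖a‖ ≤ 1 + δ ^ 2 := by
        calc ‖a‖ = ‖(a - 1) + 1‖ := by ring_nf
          _ ≤ ‖a - 1‖ + 1 := by
              simpa using norm_add_le (a - 1) 1
          _ ≤ 1 + δ ^ 2 := by linarith
      -- Goal 1
      have goal1 : ‖nlft m γ z 0 0 - 1‖ ≤ (δ + G) ^ 2 := by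
        have hre : nlft m γ z 0 0 - 1 =
            (c:ℂ) * (a - 1) + ((c:ℂ) - 1) +
              ((c:ℂ) * (-(starRingEnd ℂ g) * z ^ (-K))) * b := by
          rw [hA]; ring
        rw [hre]
        have h3 := abs3_aux ((c:ℂ) * (a - 1)) ((c:ℂ) - 1)
          (((c:ℂ) * (-(starRingEnd ℂ g) * z ^ (-K))) * b)
        have e1 : ‖(c:ℂ) * (a - 1)‖ = c * ‖a - 1‖ := by
          rw [norm_mul, habs_c]
        have e3 : ‖((c:ℂ) * (-(starRingEnd ℂ g) * z ^ (-K))) * b‖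
            = c * (G * ‖b‖) := by
          rw [norm_mul, norm_mul, norm_mul, norm_neg, habs_c,
            Complex.norm_conj, hzK', ← hGdef]
          ring
        rw [e1, e3, habs_cm1] at h3
        calc ‖_‖ ≤ c * ‖a - 1‖ + (1 - c)
              + c * (G * ‖b‖) := h3
          _ ≤ (δ + G) ^ 2 :=
            arith1_aux δ G c (‖a - 1‖) (‖b‖)
              hδ0 hG0 habs_a10 habs_b0 hc3 hc2 hc1 ha hb
      -- Goal 2
      have goal2 : ‖nlft m γ z 0 1‖ ≤ 2 * (δ + G) := by
        rw [hB]
        have h2 := norm_add_le (a * ((c:ℂ) * (g * z ^ K))) (b * (c:ℂ))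
        have e1 : ‖a * ((c:ℂ) * (g * z ^ K))‖
            = ‖a‖ * (c * (G * 1)) := by
          rw [norm_mul, norm_mul, norm_mul, habs_c, hzK, ← hGdef]
        have e2 : ‖b * (c:ℂ)‖ = ‖b‖ * c := by
          rw [norm_mul, habs_c]
        rw [e1, e2] at h2
        calc ‖_‖ ≤ ‖a‖ * (c * (G * 1)) + ‖b‖ * c := h2
          _ ≤ 2 * (δ + G) :=
            arith2_aux δ G c (‖a‖) (‖b‖)
              hδ0 hG0 (norm_nonneg _) habs_b0 hc3 hc2 hδG1 haabs hb
      -- Goal 3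
      have goal3 : ‖nlft m γ z 0 1 -
          ∑ k : Fin (n+1), γ k * z ^ (m + (k : ℕ))‖ ≤ (δ + G) ^ 2 := by
        have hS : (∑ k : Fin (n+1), γ k * z ^ (m + (k : ℕ)))
            = (∑ k : Fin n, γ' k * z ^ (m + (k : ℕ))) + g * z ^ K := by
          rw [Fin.sum_univ_castSucc]
          simp [hγ', hg, hKdef]
        set S : ℂ := ∑ k : Fin n, γ' k * z ^ (m + (k : ℕ)) with hSdef
        have hre : nlft m γ z 0 1 - ∑ k : Fin (n+1), γ k * z ^ (m + (k : ℕ))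
            = ((c:ℂ) * a - 1) * (g * z ^ K) + ((c:ℂ) - 1) * b + (b - S) := by
          rw [hB, hS]; ring
        rw [hre]
        have h3 := abs3_aux (((c:ℂ) * a - 1) * (g * z ^ K)) (((c:ℂ) - 1) * b) (b - S)
        have e1 : ‖((c:ℂ) * a - 1) * (g * z ^ K)‖
            = ‖(c:ℂ) * a - 1‖ * G := by
          rw [norm_mul, norm_mul, hzK, ← hGdef]; ring
        have e2 : ‖((c:ℂ) - 1) * b‖ = (1 - c) * ‖b‖ := by
          rw [norm_mul, habs_cm1]
        rw [e1, e2] at h3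
        have hca1 : ‖(c:ℂ) * a - 1‖ ≤ δ ^ 2 + G ^ 2 / 2 := by
          have hre2 : (c:ℂ) * a - 1 = (c:ℂ) * (a - 1) + ((c:ℂ) - 1) := by ring
          rw [hre2]
          calc ‖(c:ℂ) * (a - 1) + ((c:ℂ) - 1)‖
              ≤ ‖(c:ℂ) * (a - 1)‖ + ‖(c:ℂ) - 1‖ :=
                norm_add_le _ _
            _ = c * ‖a - 1‖ + (1 - c) := by
                rw [norm_mul, habs_c, habs_cm1]
            _ ≤ δ ^ 2 + G ^ 2 / 2 := by
                have hle : c * ‖a - 1‖ ≤ ‖a - 1‖ := by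
                  nlinarith
                linarith
        calc ‖_‖ ≤ ‖(c:ℂ) * a - 1‖ * G + (1 - c) * ‖b‖
              + ‖b - S‖ := h3
          _ ≤ (δ + G) ^ 2 :=
            arith3_aux δ G c (‖(c:ℂ) * a - 1‖) (‖b‖)
              (‖b - S‖) hδ0 hG0 (norm_nonneg _) habs_b0
              hc2 hc1 hδG1 hca1 hb he
      rw [hsum]
      exact ⟨goal1, goal2, goal3⟩

theorem nlft_linear_approximation (m : ℤ) (n : ℕ) (γ : Fin n → ℂ)
    (hδ : ∑ k : Fin n, ‖γ k‖ ≤ 1) :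
    ∀ z : ℂ, ‖z‖ = 1 →
      ‖nlft m γ z 0 1 - ∑ k : Fin n, γ k * z ^ (m + (k : ℕ))‖ ≤
        Real.exp 1 * (∑ k : Fin n, ‖γ k‖) ^ 2 := by
  intro z hz
  obtain ⟨-, -, h⟩ := nlft_key m z hz n γ hδ
  have he : (1:ℝ) ≤ Real.exp 1 := by nlinarith [Real.add_one_le_exp (1:ℝ)]
  have hsq : (0:ℝ) ≤ (∑ k : Fin n, ‖γ k‖) ^ 2 := sq_nonneg _
  nlinarith
end
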